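/- arXiv:2006.07599 — 5 statements merged into one kernel-verified Lean document; each statement's English description precedes it below -/
import Mathlib

section
/- Let l ≥ 1 be an integer, ε₁,…,ε_l > 0, ω₁,…,ω_l ∈ ℝ, let η₁, η₂ ∈ ℂ with Re(η₁) > 0 and Re(η₂) > 0, let β₁, β₂, q ∈ ℂ, and let z₁, z₂ ∈ ℂ with |z₁| < 1 and |z₂| < 1. Then ∫₀¹ u^{η₁−1} (1−u)^{η₂−1} (1−z₁u)^{−β₁} (1−z₂(1−u))^{−β₂} E_{(ε_i),(ω_i)}(q·u(1−u)) du = Σ_{r=0}^∞ Σ_{s=0}^∞ Σ_{k=0}^∞ [(β₁)_r (β₂)_s z₁^r z₂^s / (r! s!)] · Γ(η₁+r+k) Γ(η₂+s+k) q^k / (Γ(ω₁+ε₁k)⋯Γ(ω_l+ε_l k) · Γ(η₁+η₂+r+s+2k)). -/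
open Complex Polynomial Filter

namespace BetaML

lemma poch_norm_le (β : ℂ) (n : ℕ) :
    ‖(ascPochhammer ℂ n).eval β‖ ≤ (ascPochhammer ℝ n).eval (‖β‖ + 1) := by
  induction n with
  | zero => simp
  | succ n ih =>
      rw [ascPochhammer_succ_right, ascPochhammer_succ_right]
      simp only [Polynomial.eval_mul, Polynomial.eval_add, Polynomial.eval_X,
        Polynomial.eval_natCast, norm_mul]
      have h1 : ‖β + (n : ℂ)‖ ≤ ‖β‖ + 1 + n := by
        calc ‖β + (n : ℂ)‖ ≤ ‖β‖ + ‖(n : ℂ)‖ := norm_add_le _ _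
        _ = ‖β‖ + n := by rw [Complex.norm_natCast]
        _ ≤ ‖β‖ + 1 + n := by linarith
      have h2 : (0:ℝ) < ‖β‖ + 1 + n := by positivity
      exact mul_le_mul ih h1 (norm_nonneg _)
        (le_of_lt (ascPochhammer_pos n _ (by positivity)))

lemma summable_poch_aux (x : ℝ) (hx : 0 < x) (m : ℕ) {r : ℝ} (h0 : 0 < r) (hr : r < 1) :
    Summable (fun n : ℕ => (ascPochhammer ℝ (n + m)).eval x / n.factorial * r ^ n) := by
  have hpos : ∀ n : ℕ, 0 < (ascPochhammer ℝ (n + m)).eval x / n.factorial * r ^ n := by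
    intro n
    have := ascPochhammer_pos (n + m) x hx
    have : (0:ℝ) < (ascPochhammer ℝ (n + m)).eval x / n.factorial :=
      div_pos this (by exact_mod_cast Nat.factorial_pos n)
    exact mul_pos this (pow_pos h0 n)
  apply summable_of_ratio_test_tendsto_lt_one hr
  · exact Eventually.of_forall fun n => (hpos n).ne'
  · have key : ∀ n : ℕ, ‖(ascPochhammer ℝ (n + 1 + m)).eval x / (n+1).factorial * r ^ (n+1)‖
        / ‖(ascPochhammer ℝ (n + m)).eval x / n.factorial * r ^ n‖
        = (x + (n + m)) * r / (n + 1) := by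
      intro n
      have e1 : (ascPochhammer ℝ (n + 1 + m)).eval x
          = (ascPochhammer ℝ (n + m)).eval x * (x + (n + m)) := by
        rw [show n + 1 + m = (n + m) + 1 by ring, ascPochhammer_succ_right]
        push_cast
        simp [Polynomial.eval_mul]
      rw [Real.norm_eq_abs, Real.norm_eq_abs, abs_of_pos (hpos (n+1)), abs_of_pos (hpos n), e1]
      have hf : ((n+1).factorial : ℝ) = (n+1) * n.factorial := by
        rw [Nat.factorial_succ]; push_cast; ring
      rw [hf]
      have hfn : (n.factorial : ℝ) ≠ 0 := by exact_mod_cast (Nat.factorial_pos n).ne'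
      have hP : (ascPochhammer ℝ (n + m)).eval x ≠ 0 := (ascPochhammer_pos (n+m) x hx).ne'
      field_simp
      ring
    simp_rw [key]
    have h1 : Tendsto (fun n : ℕ => (x + m - 1) * (1 / ((n:ℝ) + 1)) + 1) atTop (nhds 1) := by
      have := tendsto_one_div_add_atTop_nhds_zero_nat.const_mul (x + m - 1)
      simpa using this.add_const 1
    have h2 := h1.mul_const r
    have : ∀ n : ℕ, (x + ((n:ℝ) + m)) * r / (n + 1)
        = ((x + m - 1) * (1 / ((n:ℝ) + 1)) + 1) * r := by
      intro n
      have : ((n:ℝ) + 1) ≠ 0 := by positivity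
      field_simp
      ring_nf
    simp_rw [this]
    simpa using h2


noncomputable def pc (β : ℂ) (n : ℕ) : ℂ := (ascPochhammer ℂ n).eval β / n.factorial

lemma pc_succ (β : ℂ) (n : ℕ) : ((n : ℂ) + 1) * pc β (n + 1) = (β + n) * pc β n := by
  have hfn : ((n.factorial : ℕ) : ℂ) ≠ 0 := by exact_mod_cast (Nat.factorial_pos n).ne'
  have hn1 : ((n : ℂ) + 1) ≠ 0 := by
    exact_mod_cast (Nat.cast_add_one_ne_zero (R := ℂ) n)
  simp only [pc, ascPochhammer_succ_right, Polynomial.eval_mul, Polynomial.eval_add,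
    Polynomial.eval_X, Polynomial.eval_natCast, Nat.factorial_succ]
  push_cast
  field_simp

lemma pc_norm_le (β : ℂ) (n : ℕ) :
    ‖pc β n‖ ≤ (ascPochhammer ℝ n).eval (‖β‖ + 1) / n.factorial := by
  rw [pc, norm_div, Complex.norm_natCast]
  have : (0:ℝ) < n.factorial := by exact_mod_cast Nat.factorial_pos n
  gcongr
  exact poch_norm_le β n

lemma summable_norm_pc_mul_pow (β : ℂ) {w : ℂ} (hw : ‖w‖ < 1) :
    Summable (fun n : ℕ => ‖pc β n * w ^ n‖) := by
  set r : ℝ := (‖w‖ + 1) / 2 with hrdef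
  have h0 : 0 < r := by positivity
  have hr : r < 1 := by simp only [hrdef]; linarith
  have hwr : ‖w‖ ≤ r := by simp only [hrdef]; linarith
  refine Summable.of_nonneg_of_le (fun n => norm_nonneg _) ?_
    (summable_poch_aux (‖β‖ + 1) (by positivity) 0 h0 hr)
  · intro n
    rw [norm_mul, norm_pow]
    simp only [Nat.add_zero]
    have h1 := pc_norm_le β n
    have h2 : ‖w‖ ^ n ≤ r ^ n := pow_le_pow_left₀ (norm_nonneg _) hwr n
    have h3 : (0:ℝ) ≤ (ascPochhammer ℝ n).eval (‖β‖ + 1) / n.factorial := by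
      have := ascPochhammer_pos n (‖β‖+1) (by positivity)
      positivity
    exact mul_le_mul h1 h2 (by positivity) h3


lemma summable_pc_deriv (β : ℂ) {R : ℝ} (h0 : 0 < R) (hR : R < 1) :
    Summable (fun n : ℕ => ‖pc β (n+1)‖ * ((n:ℝ)+1) * R ^ n) := by
  refine Summable.of_nonneg_of_le (fun n => by positivity) ?_
    (summable_poch_aux (‖β‖+1) (by positivity) 1 h0 hR)
  intro n
  have hfn : (0:ℝ) < n.factorial := by exact_mod_cast Nat.factorial_pos n
  have h2 : ‖pc β (n+1)‖ * ((n:ℝ)+1)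
      ≤ (ascPochhammer ℝ (n+1)).eval (‖β‖+1) / n.factorial := by
    have h1 := pc_norm_le β (n+1)
    have h3 : (ascPochhammer ℝ (n+1)).eval (‖β‖+1) / (n+1).factorial * ((n:ℝ)+1)
        = (ascPochhammer ℝ (n+1)).eval (‖β‖+1) / n.factorial := by
      rw [Nat.factorial_succ]
      push_cast
      have : ((n:ℝ)+1) ≠ 0 := by positivity
      field_simp
    calc ‖pc β (n+1)‖ * ((n:ℝ)+1)
        ≤ (ascPochhammer ℝ (n+1)).eval (‖β‖+1) / (n+1).factorial * ((n:ℝ)+1) :=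
          mul_le_mul_of_nonneg_right h1 (by positivity)
      _ = _ := h3
  exact mul_le_mul_of_nonneg_right h2 (pow_nonneg h0.le n)

lemma hasDerivAt_pcsum (β : ℂ) {w : ℂ} (hw : ‖w‖ < 1) :
    HasDerivAt (fun z : ℂ => ∑' n : ℕ, pc β n * z ^ n)
      (∑' n : ℕ, ((n : ℂ) + 1) * pc β (n + 1) * w ^ n) w := by
  set R : ℝ := (‖w‖ + 1) / 2 with hRdef
  have h0 : 0 < R := by positivity
  have hR : R < 1 := by simp only [hRdef]; linarith
  have hwR : ‖w‖ < R := by simp only [hRdef]; linarith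
  have htmem : ∀ z ∈ Metric.ball (0:ℂ) R, ‖z‖ < R := fun z hz => by
    simpa using hz
  have hg : ∀ (n : ℕ) (y : ℂ), y ∈ Metric.ball (0:ℂ) R →
      HasDerivAt (fun z => pc β (n+1) * z ^ (n+1))
      (pc β (n+1) * (((n:ℂ)+1) * y ^ n)) y := by
    intro n y _
    have := (hasDerivAt_pow (n+1) y).const_mul (pc β (n+1))
    simpa using this
  have hu : Summable (fun n : ℕ => ‖pc β (n+1)‖ * ((n:ℝ)+1) * R ^ n) :=
    summable_pc_deriv β h0 hR
  have hbound : ∀ (n : ℕ) (y : ℂ), y ∈ Metric.ball (0:ℂ) R →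
      ‖pc β (n+1) * (((n:ℂ)+1) * y ^ n)‖ ≤ ‖pc β (n+1)‖ * ((n:ℝ)+1) * R ^ n := by
    intro n y hy
    rw [norm_mul, norm_mul, norm_pow]
    have h1 : ‖(n:ℂ)+1‖ = (n:ℝ)+1 := by
      rw [show ((n:ℂ)+1) = ((n+1 : ℕ):ℂ) by push_cast; ring, Complex.norm_natCast]
      push_cast; ring
    rw [h1, ← mul_assoc]
    gcongr
    exact (htmem y hy).le
  have hmem : w ∈ Metric.ball (0:ℂ) R := by simpa using hwR
  have h0mem : (0:ℂ) ∈ Metric.ball (0:ℂ) R := by simpa using h0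
  have hg0 : Summable fun n : ℕ => pc β (n+1) * (0:ℂ) ^ (n+1) :=
    summable_zero.congr fun n => by simp
  have hder := hasDerivAt_tsum_of_isPreconnected hu Metric.isOpen_ball
    (convex_ball (0:ℂ) R).isPreconnected hg hbound h0mem hg0 hmem
  have heq : (fun z : ℂ => ∑' n : ℕ, pc β n * z ^ n)
      =ᶠ[nhds w] (fun z : ℂ => pc β 0 + ∑' n : ℕ, pc β (n+1) * z ^ (n+1)) := by
    refine Filter.eventually_of_mem (Metric.isOpen_ball.mem_nhds hmem) fun z hz => ?_
    have hs : Summable fun n : ℕ => pc β n * z ^ n :=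
      (summable_norm_pc_mul_pow β ((htmem z hz).trans hR)).of_norm
    show ∑' n : ℕ, pc β n * z ^ n = pc β 0 + ∑' n : ℕ, pc β (n+1) * z ^ (n+1)
    rw [Summable.tsum_eq_zero_add hs]
    simp
  have := (hder.const_add (pc β 0)).congr_of_eventuallyEq heq
  refine this.congr_deriv ?_
  exact tsum_congr fun n => by ring

theorem hasSum_poch_cpow (β : ℂ) {w : ℂ} (hw : ‖w‖ < 1) :
    HasSum (fun n : ℕ => (ascPochhammer ℂ n).eval β / n.factorial * w ^ n)
      ((1 - w) ^ (-β)) := by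
  have hsum : ∀ {z : ℂ}, ‖z‖ < 1 → Summable fun n : ℕ => pc β n * z ^ n :=
    fun hz => (summable_norm_pc_mul_pow β hz).of_norm
  -- the ODE : (1-z) * f' z = β * f z  on the ball
  have hode : ∀ z : ℂ, ‖z‖ < 1 →
      (1 - z) * (∑' n : ℕ, ((n:ℂ)+1) * pc β (n+1) * z ^ n)
        = β * ∑' n : ℕ, pc β n * z ^ n := by
    intro z hz
    have s1 : Summable fun n : ℕ => pc β n * z ^ n := hsum hz
    have s2 : Summable fun n : ℕ => ((n:ℂ)+1) * pc β (n+1) * z ^ n := by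
      refine Summable.of_norm ?_
      have h0 : 0 < (‖z‖ + 1) / 2 := by positivity
      have hR : (‖z‖ + 1) / 2 < 1 := by linarith
      have hzR : ‖z‖ ≤ (‖z‖ + 1) / 2 := by linarith
      refine Summable.of_nonneg_of_le (fun n => norm_nonneg _) ?_ (summable_pc_deriv β h0 hR)
      intro n
      rw [norm_mul, norm_mul, norm_pow]
      have h1 : ‖(n:ℂ)+1‖ = (n:ℝ)+1 := by
        rw [show ((n:ℂ)+1) = ((n+1 : ℕ):ℂ) by push_cast; ring, Complex.norm_natCast]
        push_cast; ring
      rw [h1,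
        show ((n:ℝ)+1) * ‖pc β (n+1)‖ * ‖z‖ ^ n = ‖pc β (n+1)‖ * ((n:ℝ)+1) * ‖z‖ ^ n by ring]
      gcongr
    have sA : Summable fun n : ℕ => (n:ℂ) * pc β n * z ^ n := by
      refine (summable_nat_add_iff 1).mp ?_
      refine (s2.mul_right z).congr fun n => ?_
      push_cast
      ring
    have hAz : ∑' n : ℕ, (n:ℂ) * pc β n * z ^ n
        = z * ∑' n : ℕ, ((n:ℂ)+1) * pc β (n+1) * z ^ n := by
      rw [Summable.tsum_eq_zero_add sA]
      simp only [Nat.cast_zero, zero_mul, pow_zero, mul_one, zero_add]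
      rw [← tsum_mul_left]
      exact tsum_congr fun n => by push_cast; ring
    rw [sub_mul, one_mul, ← hAz, ← Summable.tsum_sub s2 sA, ← tsum_mul_left]
    refine tsum_congr fun n => ?_
    have key := pc_succ β n
    calc ((n:ℂ)+1) * pc β (n+1) * z ^ n - (n:ℂ) * pc β n * z ^ n
        = (((n:ℂ)+1) * pc β (n+1) - (n:ℂ) * pc β n) * z ^ n := by ring
      _ = (β * pc β n) * z ^ n := by rw [key]; ring
      _ = β * (pc β n * z ^ n) := by ring
  -- the auxiliary function (1-z)^β * f z is constant on the ball
  have hconst : ∀ z : ℂ, ‖z‖ < 1 →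
      (1 - z) ^ β * ∑' n : ℕ, pc β n * z ^ n = 1 := by
    have hd : ∀ z ∈ Metric.ball (0:ℂ) 1,
        HasDerivAt (fun y => (1 - y) ^ β * ∑' n : ℕ, pc β n * y ^ n) 0 z := by
      intro z hz
      have hz1 : ‖z‖ < 1 := by simpa using hz
      have hre : (1 - z) ∈ Complex.slitPlane := by
        refine Or.inl ?_
        simp only [Complex.sub_re, Complex.one_re]
        have h2 := Complex.abs_re_le_norm z
        have h3 : z.re < 1 := lt_of_le_of_lt (le_trans (le_abs_self _) h2) hz1
        linarith
      have h1z : (1:ℂ) - z ≠ 0 := Complex.slitPlane_ne_zero hre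
      have hc : HasDerivAt (fun y : ℂ => (1 - y) ^ β)
          (β * (1 - z) ^ (β - 1) * (-1)) z := by
        have hid : HasDerivAt (fun y : ℂ => 1 - y) (-1) z := by
          simpa using (hasDerivAt_id z).const_sub 1
        exact HasDerivAt.cpow_const hid hre
      have hf := hasDerivAt_pcsum β hz1
      have hmul := hc.mul hf
      have hzero : β * (1 - z) ^ (β - 1) * (-1) * (∑' n : ℕ, pc β n * z ^ n)
          + (1 - z) ^ β * (∑' n : ℕ, ((n:ℂ)+1) * pc β (n+1) * z ^ n) = 0 := by
        have hpow : (1 - z) ^ β = (1 - z) ^ (β - 1) * (1 - z) := by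
          nth_rewrite 1 [show β = β - 1 + 1 by ring]
          rw [Complex.cpow_add _ _ h1z, Complex.cpow_one]
        rw [hpow]
        have ho := hode z hz1
        linear_combination (1 - z) ^ (β - 1) * ho
      rw [← hzero]
      exact hmul
    intro z hz
    have hz' : z ∈ Metric.ball (0:ℂ) 1 := by simpa using hz
    have h0' : (0:ℂ) ∈ Metric.ball (0:ℂ) 1 := by simp
    have hdiff : DifferentiableOn ℂ (fun y => (1 - y) ^ β * ∑' n : ℕ, pc β n * y ^ n)
        (Metric.ball (0:ℂ) 1) :=
      fun y hy => ((hd y hy).differentiableAt).differentiableWithinAt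
    have hfd : ∀ y ∈ Metric.ball (0:ℂ) 1,
        fderivWithin ℂ (fun y => (1 - y) ^ β * ∑' n : ℕ, pc β n * y ^ n)
          (Metric.ball (0:ℂ) 1) y = 0 := by
      intro y hy
      rw [fderivWithin_of_isOpen Metric.isOpen_ball hy, (hd y hy).hasFDerivAt.fderiv]
      ext
      simp
    have hcc := (convex_ball (0:ℂ) 1).is_const_of_fderivWithin_eq_zero hdiff hfd hz' h0'
    rw [hcc]
    have hf0 : ∑' n : ℕ, pc β n * (0:ℂ) ^ n = 1 := by
      rw [tsum_eq_single 0 (fun n hn => by simp [zero_pow hn])]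
      simp [pc]
    rw [hf0]
    simp
  -- conclude
  have hfw : ∑' n : ℕ, pc β n * w ^ n = (1 - w) ^ (-β) := by
    rw [Complex.cpow_neg]
    exact eq_inv_of_mul_eq_one_left (by rw [mul_comm]; exact hconst w hw)
  have hs := (hsum hw).hasSum
  rw [hfw] at hs
  simpa only [pc] using hs


lemma one_le_Gamma_of_two_le {x : ℝ} (hx : 2 ≤ x) : 1 ≤ Real.Gamma x := by
  rcases eq_or_lt_of_le hx with h | h
  · rw [← h, Real.Gamma_two]
  · have h2 := Real.Gamma_strictMonoOn_Ici Set.self_mem_Ici (Set.mem_Ici.mpr hx) h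
    rw [Real.Gamma_two] at h2
    exact h2.le

lemma factorial_le_Gamma_add {x : ℝ} (hx : 2 ≤ x) (n : ℕ) :
    (n.factorial : ℝ) ≤ Real.Gamma (x + n) := by
  induction n with
  | zero => simpa using one_le_Gamma_of_two_le hx
  | succ n ih =>
      have hx0 : x + n ≠ 0 := by positivity
      have hG : Real.Gamma (x + ((n:ℝ) + 1)) = (x + n) * Real.Gamma (x + n) := by
        rw [show x + ((n:ℝ) + 1) = (x + n) + 1 by ring, Real.Gamma_add_one hx0]
      push_cast [Nat.factorial_succ]
      rw [hG]
      have h1 : ((n:ℝ) + 1) ≤ x + n := by linarith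
      have h2 : (0:ℝ) ≤ (n.factorial : ℝ) := by positivity
      exact mul_le_mul h1 ih h2 (by linarith)

lemma summable_norm_ML (l : ℕ) (hl : 1 ≤ l) (ε ω : Fin l → ℝ) (hε : ∀ i, 0 < ε i) (q : ℂ) :
    Summable (fun k : ℕ => ‖q ^ k / ∏ i, Complex.Gamma (((ω i + ε i * k : ℝ) : ℂ))‖) := by
  classical
  set i₀ : Fin l := ⟨0, hl⟩
  set e : ℝ := ε i₀ with hedef
  set o : ℝ := ω i₀ with hodef
  have he : 0 < e := hε i₀
  -- threshold beyond which all Gamma arguments are at least 2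
  have hthresh : ∀ i : Fin l, ∃ N : ℕ, ∀ k : ℕ, N ≤ k → 2 ≤ ω i + ε i * k := by
    intro i
    refine ⟨⌈(2 - ω i) / ε i⌉₊, fun k hk => ?_⟩
    have h1 : (2 - ω i) / ε i ≤ (k : ℝ) := le_trans (Nat.le_ceil _) (by exact_mod_cast hk)
    have := (div_le_iff₀ (hε i)).mp h1
    linarith
  choose N hN using hthresh
  set K₀ : ℕ := Finset.univ.sup N with hK₀def
  have hK₀ : ∀ i : Fin l, ∀ k : ℕ, K₀ ≤ k → 2 ≤ ω i + ε i * k := by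
    intro i k hk
    exact hN i k (le_trans (Finset.le_sup (Finset.mem_univ i)) hk)
  -- the factorial lower bound for the product
  set m : ℕ → ℕ := fun k => ⌊e * k + (o - 2)⌋₊ with hmdef
  have hprodG : ∀ k : ℕ, K₀ ≤ k →
      ((m k).factorial : ℝ) ≤ ∏ i, ‖Complex.Gamma (((ω i + ε i * k : ℝ) : ℂ))‖ := by
    intro k hk
    have hnorm : ∀ i : Fin l,
        ‖Complex.Gamma (((ω i + ε i * k : ℝ) : ℂ))‖ = Real.Gamma (ω i + ε i * k) := by
      intro i
      rw [Complex.Gamma_ofReal, Complex.norm_real, Real.norm_eq_abs,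
        abs_of_pos (lt_of_lt_of_le one_pos (one_le_Gamma_of_two_le (hK₀ i k hk)))]
    have hone : ∀ i ∈ Finset.univ, (1:ℝ) ≤ ‖Complex.Gamma (((ω i + ε i * k : ℝ) : ℂ))‖ := by
      intro i _
      rw [hnorm i]
      exact one_le_Gamma_of_two_le (hK₀ i k hk)
    have hone' : (1:ℝ) ≤ ∏ i ∈ Finset.univ.erase i₀, ‖Complex.Gamma (((ω i + ε i * k : ℝ) : ℂ))‖ := by
      calc (1:ℝ) = ∏ _i ∈ Finset.univ.erase i₀, (1:ℝ) := (Finset.prod_const_one).symm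
      _ ≤ _ := Finset.prod_le_prod (fun i _ => zero_le_one) (fun i _ => hone i (Finset.mem_univ i))
    have hsingle : ‖Complex.Gamma (((ω i₀ + ε i₀ * k : ℝ) : ℂ))‖
        ≤ ∏ i, ‖Complex.Gamma (((ω i + ε i * k : ℝ) : ℂ))‖ := by
      rw [← Finset.mul_prod_erase Finset.univ _ (Finset.mem_univ i₀)]
      nth_rewrite 1 [← mul_one (‖Complex.Gamma (((ω i₀ + ε i₀ * k : ℝ) : ℂ))‖)]
      exact mul_le_mul_of_nonneg_left hone' (norm_nonneg _)
    have hfact : ((m k).factorial : ℝ) ≤ ‖Complex.Gamma (((ω i₀ + ε i₀ * k : ℝ) : ℂ))‖ := by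
      rw [hnorm i₀, ← hedef, ← hodef]
      have hnn : 0 ≤ e * k + (o - 2) := by
        have := hK₀ i₀ k hk
        rw [← hedef, ← hodef] at this
        linarith
      have hfloor : (m k : ℝ) ≤ e * k + (o - 2) := Nat.floor_le hnn
      have hx2 : 2 ≤ o + e * k - m k := by linarith
      have := factorial_le_Gamma_add hx2 (m k)
      rw [show o + e * k - (m k : ℝ) + (m k : ℝ) = o + e * k by ring] at this
      exact this
    exact le_trans hfact hsingle
  -- growth of the factorial beats any geometric factor
  set Q : ℝ := ‖q‖ + 1 with hQdef
  have hQ1 : 1 ≤ Q := by have := norm_nonneg q; simp only [hQdef]; linarith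
  have hqQ : ‖q‖ < Q := by simp only [hQdef]; linarith
  set R : ℝ := Q ^ (2 / e) with hRdef
  have hR0 : 0 < R := Real.rpow_pos_of_pos (by linarith) _
  have hR1 : 1 ≤ R := by
    rw [hRdef, show (1:ℝ) = Q ^ (0:ℝ) by simp]
    exact Real.rpow_le_rpow_of_exponent_le hQ1 (by positivity)
  obtain ⟨N₁, hN₁⟩ : ∃ N₁ : ℕ, ∀ n : ℕ, N₁ ≤ n → R ^ n ≤ (n.factorial : ℝ) := by
    have := (Real.summable_pow_div_factorial R).tendsto_atTop_zero
    have hev := Filter.Tendsto.eventually_lt_const one_pos this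
    rw [Filter.eventually_atTop] at hev
    obtain ⟨N₁, hN₁⟩ := hev
    refine ⟨N₁, fun n hn => ?_⟩
    have h1 := hN₁ n hn
    have hfp : (0:ℝ) < n.factorial := by exact_mod_cast Nat.factorial_pos n
    have := (div_lt_one hfp).mp h1
    linarith
  obtain ⟨K₁, hK₁⟩ := exists_nat_ge (max ((2 * (3 - o)) / e) ((2 * N₁) / e))
  set K : ℕ := max K₀ K₁ with hKdef
  -- the final comparison for k ≥ K
  have hbound : ∀ k : ℕ, K ≤ k →
      ‖q ^ k / ∏ i, Complex.Gamma (((ω i + ε i * k : ℝ) : ℂ))‖ ≤ (‖q‖ / Q) ^ k := by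
    intro k hk
    have hkK₀ : K₀ ≤ k := le_trans (le_max_left _ _) hk
    have hkK₁ : (K₁ : ℝ) ≤ (k : ℝ) := by exact_mod_cast le_trans (le_max_right _ _) hk
    have hk1 : (2 * (3 - o)) / e ≤ (k : ℝ) := le_trans (le_trans (le_max_left _ _) hK₁) hkK₁
    have hk2 : (2 * N₁) / e ≤ (k : ℝ) := le_trans (le_trans (le_max_right _ _) hK₁) hkK₁
    have hmk : e * k / 2 ≤ (m k : ℝ) := by
      have h1 : e * k + (o - 2) < (m k : ℝ) + 1 := Nat.lt_floor_add_one _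
      have h2 : 2 * (3 - o) ≤ e * k := by rw [mul_comm e]; exact (div_le_iff₀ he).mp hk1
      linarith
    have hmkN : (N₁ : ℝ) ≤ (m k : ℝ) := by
      have h2 : 2 * (N₁ : ℝ) ≤ e * k := by rw [mul_comm e]; exact (div_le_iff₀ he).mp hk2
      linarith
    have hRm : Q ^ k ≤ ((m k).factorial : ℝ) := by
      have h1 : R ^ (m k) ≤ ((m k).factorial : ℝ) := hN₁ (m k) (by exact_mod_cast hmkN)
      refine le_trans ?_ h1
      have h2 : (R : ℝ) ^ (m k) = Q ^ ((2 / e) * (m k : ℝ)) := by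
        rw [← Real.rpow_natCast R (m k), hRdef, ← Real.rpow_mul (by linarith)]
      have h3 : (Q : ℝ) ^ k = Q ^ ((k : ℝ)) := by rw [Real.rpow_natCast]
      rw [h2, h3]
      refine Real.rpow_le_rpow_of_exponent_le hQ1 ?_
      have : (k : ℝ) ≤ (2 / e) * (e * k / 2) := by
        rw [show (2 / e) * (e * k / 2) = (k : ℝ) * (e / e) by ring, div_self he.ne', mul_one]
      exact le_trans this (by
        have h4 : (0:ℝ) ≤ 2 / e := by positivity
        exact mul_le_mul_of_nonneg_left hmk h4)
    -- assemble
    rw [norm_div, norm_pow, norm_prod, div_pow]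
    have hfac1 : (1:ℝ) ≤ ((m k).factorial : ℝ) := by exact_mod_cast Nat.one_le_iff_ne_zero.mpr (Nat.factorial_ne_zero (m k))
    have hprod := hprodG k hkK₀
    have hQk : (0:ℝ) < Q ^ k := by positivity
    exact div_le_div_of_nonneg_left (pow_nonneg (norm_nonneg q) k) hQk
      (le_trans hRm hprod)
  have hgeom : Summable (fun k : ℕ => (‖q‖ / Q) ^ k) := by
    refine summable_geometric_of_lt_one (by positivity) ?_
    rw [div_lt_one (by linarith)]
    exact hqQ
  refine (summable_nat_add_iff K).mp ?_
  refine Summable.of_nonneg_of_le (fun n => norm_nonneg _)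
    (fun n => hbound (n + K) (by omega)) ?_
  exact (summable_nat_add_iff K).mpr hgeom

end BetaML

set_option maxHeartbeats 2000000 in
open BetaML MeasureTheory in
/-- Theorem 2.2: beta-type integral of `(1-z₁u)^{-β₁}(1-z₂(1-u))^{-β₂}` against the
multi-index Mittag-Leffler function `E_{(εᵢ),(ωᵢ)}(q u(1-u))`. -/
theorem beta_integral_appellF3_multiML
    (l : ℕ) (hl : 1 ≤ l) (ε ω : Fin l → ℝ) (hε : ∀ i, 0 < ε i)
    (η₁ η₂ β₁ β₂ q z₁ z₂ : ℂ) (hη₁ : 0 < η₁.re) (hη₂ : 0 < η₂.re)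
    (hz₁ : ‖z₁‖ < 1) (hz₂ : ‖z₂‖ < 1) :
    (∫ u in (0:ℝ)..1, (u : ℂ) ^ (η₁ - 1) * (1 - (u : ℂ)) ^ (η₂ - 1)
        * (1 - z₁ * (u : ℂ)) ^ (-β₁) * (1 - z₂ * (1 - (u : ℂ))) ^ (-β₂)
        * ∑' k : ℕ, (q * (u : ℂ) * (1 - (u : ℂ))) ^ k
            / ∏ i, Complex.Gamma (((ω i + ε i * k : ℝ) : ℂ)))
    = ∑' r : ℕ, ∑' s : ℕ, ∑' k : ℕ,
        ((ascPochhammer ℂ r).eval β₁ * (ascPochhammer ℂ s).eval β₂ * z₁ ^ r * z₂ ^ s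
            / ((r.factorial : ℂ) * (s.factorial : ℂ)))
        * (Complex.Gamma (η₁ + r + k) * Complex.Gamma (η₂ + s + k) * q ^ k
            / ((∏ i, Complex.Gamma (((ω i + ε i * k : ℝ) : ℂ)))
                * Complex.Gamma (η₁ + η₂ + r + s + 2 * k))) := by
  have hz₁' : ‖z₁‖ < 1 := hz₁
  have hz₂' : ‖z₂‖ < 1 := hz₂
  set Γp : ℕ → ℂ := fun k => ∏ i, Complex.Gamma (((ω i + ε i * k : ℝ) : ℂ)) with hΓp
  set c₁ : ℕ → ℂ := fun r => (ascPochhammer ℂ r).eval β₁ / r.factorial * z₁ ^ r with hc₁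
  set c₂ : ℕ → ℂ := fun s => (ascPochhammer ℂ s).eval β₂ / s.factorial * z₂ ^ s with hc₂
  set c₃ : ℕ → ℂ := fun k => q ^ k / Γp k with hc₃
  set F : (ℕ × ℕ) × ℕ → ℝ → ℂ := fun p u =>
    c₁ p.1.1 * c₂ p.1.2 * c₃ p.2 *
      ((u : ℂ) ^ (η₁ + p.1.1 + p.2 - 1) * ((1 : ℂ) - u) ^ (η₂ + p.1.2 + p.2 - 1)) with hF
  set T : (ℕ × ℕ) × ℕ → ℂ := fun p =>
    c₁ p.1.1 * c₂ p.1.2 * c₃ p.2 *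
      (Complex.Gamma (η₁ + p.1.1 + p.2) * Complex.Gamma (η₂ + p.1.2 + p.2)
        / Complex.Gamma (η₁ + p.1.1 + p.2 + (η₂ + p.1.2 + p.2))) with hT
  -- summability of the coefficient sequences
  have S₁ : Summable fun r : ℕ => ‖c₁ r‖ := by
    have := summable_norm_pc_mul_pow β₁ hz₁'
    simpa only [pc] using this
  have S₂ : Summable fun s : ℕ => ‖c₂ s‖ := by
    have := summable_norm_pc_mul_pow β₂ hz₂'
    simpa only [pc] using this
  have S₃ : Summable fun k : ℕ => ‖c₃ k‖ := summable_norm_ML l hl ε ω hε q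
  -- positivity of real parts
  have hre1 : ∀ r k : ℕ, 0 < (η₁ + (r : ℂ) + (k : ℂ)).re := by
    intro r k
    simp only [Complex.add_re, Complex.natCast_re]
    have : (0:ℝ) ≤ (r:ℝ) := Nat.cast_nonneg r
    have : (0:ℝ) ≤ (k:ℝ) := Nat.cast_nonneg k
    positivity
  have hre2 : ∀ s k : ℕ, 0 < (η₂ + (s : ℂ) + (k : ℂ)).re := by
    intro s k
    simp only [Complex.add_re, Complex.natCast_re]
    have : (0:ℝ) ≤ (s:ℝ) := Nat.cast_nonneg s
    have : (0:ℝ) ≤ (k:ℝ) := Nat.cast_nonneg k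
    positivity
  -- integrability of each term
  have hInt : ∀ p : (ℕ × ℕ) × ℕ, IntegrableOn (F p) (Set.Ioo (0:ℝ) 1) volume := by
    intro p
    have hbase := (Complex.betaIntegral_convergent (hre1 p.1.1 p.2) (hre2 p.1.2 p.2)).1
    exact ((hbase.mono_set Set.Ioo_subset_Ioc_self).const_mul _)
  -- the comparison function
  set b0 : ℝ → ℂ := fun u =>
    (u : ℂ) ^ ((η₁.re : ℂ) - 1) * ((1 : ℂ) - u) ^ ((η₂.re : ℂ) - 1) with hb0
  have hb0re1 : 0 < ((η₁.re : ℂ)).re := by simpa using hη₁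
  have hb0re2 : 0 < ((η₂.re : ℂ)).re := by simpa using hη₂
  have hb0int : IntegrableOn b0 (Set.Ioo (0:ℝ) 1) volume :=
    (Complex.betaIntegral_convergent hb0re1 hb0re2).1.mono_set Set.Ioo_subset_Ioc_self
  -- pointwise norm bound
  have hFnorm : ∀ p : (ℕ × ℕ) × ℕ, ∀ u ∈ Set.Ioo (0:ℝ) 1,
      ‖F p u‖ ≤ ‖c₁ p.1.1‖ * ‖c₂ p.1.2‖ * ‖c₃ p.2‖ * ‖b0 u‖ := by
    rintro ⟨⟨r, s⟩, k⟩ u ⟨hu0, hu1⟩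
    have h1u : (0:ℝ) < 1 - u := by linarith
    have hcast : (1 : ℂ) - u = ((1 - u : ℝ) : ℂ) := by push_cast; ring
    have e1 : ‖(u:ℂ) ^ (η₁ + (r:ℂ) + k - 1)‖ = u ^ (η₁.re + r + k - 1) := by
      rw [Complex.norm_cpow_eq_rpow_re_of_pos hu0]
      congr 1
      try simp [Complex.sub_re, Complex.add_re, Complex.natCast_re]
    have e2 : ‖((1:ℂ) - u) ^ (η₂ + (s:ℂ) + k - 1)‖ = (1 - u) ^ (η₂.re + s + k - 1) := by
      rw [hcast, Complex.norm_cpow_eq_rpow_re_of_pos h1u]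
      congr 1
      try simp [Complex.sub_re, Complex.add_re, Complex.natCast_re]
    have e3 : ‖(u:ℂ) ^ ((η₁.re : ℂ) - 1)‖ = u ^ (η₁.re - 1) := by
      rw [Complex.norm_cpow_eq_rpow_re_of_pos hu0]
      congr 1
      try simp [Complex.sub_re]
    have e4 : ‖((1:ℂ) - u) ^ ((η₂.re : ℂ) - 1)‖ = (1 - u) ^ (η₂.re - 1) := by
      rw [hcast, Complex.norm_cpow_eq_rpow_re_of_pos h1u]
      congr 1
      try simp [Complex.sub_re]
    have hb1 : u ^ (η₁.re + r + k - 1) ≤ u ^ (η₁.re - 1) := by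
      refine Real.rpow_le_rpow_of_exponent_ge hu0 hu1.le ?_
      have : (0:ℝ) ≤ (r:ℝ) := Nat.cast_nonneg r
      have : (0:ℝ) ≤ (k:ℝ) := Nat.cast_nonneg k
      linarith
    have hb2 : (1 - u) ^ (η₂.re + s + k - 1) ≤ (1 - u) ^ (η₂.re - 1) := by
      refine Real.rpow_le_rpow_of_exponent_ge h1u (by linarith) ?_
      have : (0:ℝ) ≤ (s:ℝ) := Nat.cast_nonneg s
      have : (0:ℝ) ≤ (k:ℝ) := Nat.cast_nonneg k
      linarith
    calc ‖F ((r,s),k) u‖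
        = ‖c₁ r‖ * ‖c₂ s‖ * ‖c₃ k‖ *
            (u ^ (η₁.re + r + k - 1) * (1 - u) ^ (η₂.re + s + k - 1)) := by
          simp only [hF, norm_mul, e1, e2]
          try ring
      _ ≤ ‖c₁ r‖ * ‖c₂ s‖ * ‖c₃ k‖ * (u ^ (η₁.re - 1) * (1 - u) ^ (η₂.re - 1)) := by
          have hnn : (0:ℝ) ≤ ‖c₁ r‖ * ‖c₂ s‖ * ‖c₃ k‖ := by positivity
          refine mul_le_mul_of_nonneg_left ?_ hnn
          exact mul_le_mul hb1 hb2 (Real.rpow_nonneg h1u.le _) (Real.rpow_nonneg hu0.le _)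
      _ = ‖c₁ r‖ * ‖c₂ s‖ * ‖c₃ k‖ * ‖b0 u‖ := by
          simp only [hb0, norm_mul, e3, e4]
  -- summability of the integrals of norms
  set D : ℝ := ∫ u in Set.Ioo (0:ℝ) 1, ‖b0 u‖ with hD
  have hsprod : Summable fun p : (ℕ × ℕ) × ℕ =>
      ‖c₁ p.1.1‖ * ‖c₂ p.1.2‖ * ‖c₃ p.2‖ * D := by
    have h12 : Summable fun rs : ℕ × ℕ => ‖c₁ rs.1‖ * ‖c₂ rs.2‖ :=
      S₁.mul_of_nonneg S₂ (fun _ => norm_nonneg _) (fun _ => norm_nonneg _)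
    have h123 : Summable fun p : (ℕ × ℕ) × ℕ => (‖c₁ p.1.1‖ * ‖c₂ p.1.2‖) * ‖c₃ p.2‖ :=
      h12.mul_of_nonneg S₃ (fun rs => mul_nonneg (norm_nonneg _) (norm_nonneg _))
        (fun _ => norm_nonneg _)
    exact h123.mul_right D
  have hFsum : Summable fun p : (ℕ × ℕ) × ℕ => ∫ u in Set.Ioo (0:ℝ) 1, ‖F p u‖ := by
    refine Summable.of_nonneg_of_le
      (fun p => integral_nonneg fun u => norm_nonneg _) (fun p => ?_) hsprod
    have hmono := setIntegral_mono_on ((hInt p).norm)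
      (((hb0int.norm).const_mul (‖c₁ p.1.1‖ * ‖c₂ p.1.2‖ * ‖c₃ p.2‖)))
      measurableSet_Ioo (fun u hu => hFnorm p u hu)
    calc ∫ u in Set.Ioo (0:ℝ) 1, ‖F p u‖
        ≤ ∫ u in Set.Ioo (0:ℝ) 1, ‖c₁ p.1.1‖ * ‖c₂ p.1.2‖ * ‖c₃ p.2‖ * ‖b0 u‖ := hmono
      _ = ‖c₁ p.1.1‖ * ‖c₂ p.1.2‖ * ‖c₃ p.2‖ * D := by rw [integral_const_mul]
  -- value of each integral
  have hval : ∀ p : (ℕ × ℕ) × ℕ, ∫ u in Set.Ioo (0:ℝ) 1, F p u = T p := by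
    rintro ⟨⟨r, s⟩, k⟩
    have hG3 : Complex.Gamma (η₁ + (r:ℂ) + k + (η₂ + (s:ℂ) + k)) ≠ 0 := by
      refine Complex.Gamma_ne_zero_of_re_pos ?_
      simp only [Complex.add_re]
      have h1 := hre1 r k
      have h2 := hre2 s k
      simp only [Complex.add_re] at h1 h2
      linarith
    have hbeta := Complex.Gamma_mul_Gamma_eq_betaIntegral (hre1 r k) (hre2 s k)
    have hbeta' : Complex.betaIntegral (η₁ + (r:ℂ) + k) (η₂ + (s:ℂ) + k)
        = Complex.Gamma (η₁ + (r:ℂ) + k) * Complex.Gamma (η₂ + (s:ℂ) + k)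
          / Complex.Gamma (η₁ + (r:ℂ) + k + (η₂ + (s:ℂ) + k)) := by
      rw [eq_div_iff hG3, mul_comm _ (Complex.Gamma (η₁ + (r:ℂ) + k + (η₂ + (s:ℂ) + k))),
        ← hbeta]
    calc ∫ u in Set.Ioo (0:ℝ) 1, F ((r,s),k) u
        = ∫ u in Set.Ioc (0:ℝ) 1, F ((r,s),k) u := (integral_Ioc_eq_integral_Ioo).symm
      _ = ∫ u in (0:ℝ)..1, F ((r,s),k) u := (intervalIntegral.integral_of_le zero_le_one).symm
      _ = c₁ r * c₂ s * c₃ k * ∫ u in (0:ℝ)..1,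
            (u : ℂ) ^ (η₁ + (r:ℂ) + k - 1) * ((1:ℂ) - u) ^ (η₂ + (s:ℂ) + k - 1) := by
          simp only [hF]
          rw [intervalIntegral.integral_const_mul]
      _ = c₁ r * c₂ s * c₃ k *
            Complex.betaIntegral (η₁ + (r:ℂ) + k) (η₂ + (s:ℂ) + k) := rfl
      _ = T ((r,s),k) := by rw [hbeta']
  -- pointwise expansion of the integrand
  have hpt : Set.EqOn
      (fun u : ℝ => (u : ℂ) ^ (η₁ - 1) * (1 - (u : ℂ)) ^ (η₂ - 1)
        * (1 - z₁ * (u : ℂ)) ^ (-β₁) * (1 - z₂ * (1 - (u : ℂ))) ^ (-β₂)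
        * ∑' k : ℕ, (q * (u : ℂ) * (1 - (u : ℂ))) ^ k / Γp k)
      (fun u : ℝ => ∑' p : (ℕ × ℕ) × ℕ, F p u) (Set.Ioo (0:ℝ) 1) := by
    rintro u ⟨hu0, hu1⟩
    have h1u : (0:ℝ) < 1 - u := by linarith
    have hcast : (1 : ℂ) - u = ((1 - u : ℝ) : ℂ) := by push_cast; ring
    have hu0' : (u : ℂ) ≠ 0 := Complex.ofReal_ne_zero.mpr hu0.ne'
    have h1u' : (1 : ℂ) - u ≠ 0 := by rw [hcast]; exact Complex.ofReal_ne_zero.mpr h1u.ne'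
    have habsu : ‖(u:ℂ)‖ = u := by rw [Complex.norm_real, Real.norm_eq_abs, abs_of_pos hu0]
    have habs1u : ‖(1:ℂ) - u‖ = 1 - u := by
      rw [hcast, Complex.norm_real, Real.norm_eq_abs, abs_of_pos h1u]
    have hupow : ∀ r k : ℕ, (u:ℂ) ^ (η₁ + (r:ℂ) + k - 1)
        = (u:ℂ) ^ (η₁ - 1) * ((u:ℂ) ^ r * (u:ℂ) ^ k) := by
      intro r k
      rw [show η₁ + (r:ℂ) + k - 1 = (η₁ - 1) + (((r:ℕ) + (k:ℕ) : ℕ) : ℂ) by push_cast; ring,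
        Complex.cpow_add _ _ hu0', Complex.cpow_natCast, pow_add]
    have h1upow : ∀ s k : ℕ, ((1:ℂ) - u) ^ (η₂ + (s:ℂ) + k - 1)
        = ((1:ℂ) - u) ^ (η₂ - 1) * (((1:ℂ) - u) ^ s * ((1:ℂ) - u) ^ k) := by
      intro s k
      rw [show η₂ + (s:ℂ) + k - 1 = (η₂ - 1) + (((s:ℕ) + (k:ℕ) : ℕ) : ℂ) by push_cast; ring,
        Complex.cpow_add _ _ h1u', Complex.cpow_natCast, pow_add]
    -- the three series
    have hwA : ‖z₁ * u‖ < 1 := by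
      rw [norm_mul, habsu]
      nlinarith [norm_nonneg z₁]
    have hwB : ‖z₂ * ((1:ℂ) - u)‖ < 1 := by
      rw [norm_mul, habs1u]
      nlinarith [norm_nonneg z₂]
    have hA : HasSum (fun r : ℕ => c₁ r * (u:ℂ) ^ r) ((1 - z₁ * u) ^ (-β₁)) := by
      have h := hasSum_poch_cpow β₁ hwA
      have hfe : (fun r : ℕ => (ascPochhammer ℂ r).eval β₁ / r.factorial * (z₁ * u) ^ r)
          = fun r : ℕ => c₁ r * (u:ℂ) ^ r := by
        funext r
        simp only [hc₁, mul_pow]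
        ring
      rwa [hfe] at h
    have hB : HasSum (fun s : ℕ => c₂ s * ((1:ℂ) - u) ^ s)
        ((1 - z₂ * ((1:ℂ) - u)) ^ (-β₂)) := by
      have h := hasSum_poch_cpow β₂ hwB
      have hfe : (fun s : ℕ => (ascPochhammer ℂ s).eval β₂ / s.factorial * (z₂ * ((1:ℂ) - u)) ^ s)
          = fun s : ℕ => c₂ s * ((1:ℂ) - u) ^ s := by
        funext s
        simp only [hc₂, mul_pow]
        ring
      rwa [hfe] at h
    have hn3 : Summable fun k : ℕ => ‖(q * u * ((1:ℂ) - u)) ^ k / Γp k‖ := by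
      refine Summable.of_nonneg_of_le (fun k => norm_nonneg _) (fun k => ?_) S₃
      simp only [hc₃, norm_div]
      rw [div_eq_mul_inv, div_eq_mul_inv]
      refine mul_le_mul_of_nonneg_right ?_ (inv_nonneg.mpr (norm_nonneg (Γp k)))
      rw [norm_pow, norm_pow]
      refine pow_le_pow_left₀ (norm_nonneg _) ?_ k
      rw [norm_mul, norm_mul, habsu, habs1u]
      have huu : u * (1 - u) ≤ 1 := by nlinarith
      calc ‖q‖ * u * (1 - u) = ‖q‖ * (u * (1 - u)) := by ring
        _ ≤ ‖q‖ * 1 := mul_le_mul_of_nonneg_left huu (norm_nonneg q)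
        _ = ‖q‖ := mul_one _
    have hCs : Summable fun k : ℕ => (q * u * ((1:ℂ) - u)) ^ k / Γp k := hn3.of_norm
    have hC := hCs.hasSum
    have hn1 : Summable fun r : ℕ => ‖c₁ r * (u:ℂ) ^ r‖ := by
      refine Summable.of_nonneg_of_le (fun r => norm_nonneg _) (fun r => ?_) S₁
      rw [norm_mul, norm_pow, habsu]
      nth_rewrite 2 [← mul_one ‖c₁ r‖]
      exact mul_le_mul_of_nonneg_left (pow_le_one₀ hu0.le hu1.le) (norm_nonneg _)
    have hn2 : Summable fun s : ℕ => ‖c₂ s * ((1:ℂ) - u) ^ s‖ := by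
      refine Summable.of_nonneg_of_le (fun s => norm_nonneg _) (fun s => ?_) S₂
      rw [norm_mul, norm_pow, habs1u]
      nth_rewrite 2 [← mul_one ‖c₂ s‖]
      exact mul_le_mul_of_nonneg_left (pow_le_one₀ h1u.le (by linarith)) (norm_nonneg _)
    have sAB : Summable fun p : ℕ × ℕ =>
        c₁ p.1 * (u:ℂ) ^ p.1 * (c₂ p.2 * ((1:ℂ) - u) ^ p.2) :=
      summable_mul_of_summable_norm (f := fun r : ℕ => c₁ r * (u:ℂ) ^ r)
        (g := fun s : ℕ => c₂ s * ((1:ℂ) - u) ^ s) hn1 hn2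
    have hAB := hA.mul hB sAB
    have hn12 : Summable fun p : ℕ × ℕ =>
        ‖c₁ p.1 * (u:ℂ) ^ p.1 * (c₂ p.2 * ((1:ℂ) - u) ^ p.2)‖ :=
      (hn1.mul_of_nonneg hn2 (fun _ => norm_nonneg _) (fun _ => norm_nonneg _)).congr
        fun p => (norm_mul _ _).symm
    have sABC : Summable fun p : (ℕ × ℕ) × ℕ =>
        c₁ p.1.1 * (u:ℂ) ^ p.1.1 * (c₂ p.1.2 * ((1:ℂ) - u) ^ p.1.2)
          * ((q * u * ((1:ℂ) - u)) ^ p.2 / Γp p.2) :=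
      summable_mul_of_summable_norm
        (f := fun rs : ℕ × ℕ => c₁ rs.1 * (u:ℂ) ^ rs.1 * (c₂ rs.2 * ((1:ℂ) - u) ^ rs.2))
        (g := fun k : ℕ => (q * u * ((1:ℂ) - u)) ^ k / Γp k) hn12 hn3
    have hABC := hAB.mul hC sABC
    have hfin := hABC.mul_left ((u:ℂ) ^ (η₁ - 1) * ((1:ℂ) - u) ^ (η₂ - 1))
    have hterm : ∀ p : (ℕ × ℕ) × ℕ,
        (u:ℂ) ^ (η₁ - 1) * ((1:ℂ) - u) ^ (η₂ - 1) *
          (c₁ p.1.1 * (u:ℂ) ^ p.1.1 * (c₂ p.1.2 * ((1:ℂ) - u) ^ p.1.2)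
            * ((q * u * ((1:ℂ) - u)) ^ p.2 / Γp p.2)) = F p u := by
      rintro ⟨⟨r, s⟩, k⟩
      simp only [hF, hc₃]
      rw [hupow r k, h1upow s k, mul_pow, mul_pow]
      ring
    show (u : ℂ) ^ (η₁ - 1) * (1 - (u : ℂ)) ^ (η₂ - 1)
        * (1 - z₁ * (u : ℂ)) ^ (-β₁) * (1 - z₂ * (1 - (u : ℂ))) ^ (-β₂)
        * ∑' k : ℕ, (q * (u : ℂ) * (1 - (u : ℂ))) ^ k / Γp k
      = ∑' p : (ℕ × ℕ) × ℕ, F p u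
    calc (u : ℂ) ^ (η₁ - 1) * (1 - (u : ℂ)) ^ (η₂ - 1)
          * (1 - z₁ * (u : ℂ)) ^ (-β₁) * (1 - z₂ * (1 - (u : ℂ))) ^ (-β₂)
          * ∑' k : ℕ, (q * (u : ℂ) * (1 - (u : ℂ))) ^ k / Γp k
        = (u:ℂ) ^ (η₁ - 1) * ((1:ℂ) - u) ^ (η₂ - 1)
            * ((1 - z₁ * u) ^ (-β₁) * (1 - z₂ * ((1:ℂ) - u)) ^ (-β₂)
              * ∑' k : ℕ, (q * u * ((1:ℂ) - u)) ^ k / Γp k) := by ring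
      _ = ∑' p : (ℕ × ℕ) × ℕ,
            (u:ℂ) ^ (η₁ - 1) * ((1:ℂ) - u) ^ (η₂ - 1) *
              (c₁ p.1.1 * (u:ℂ) ^ p.1.1 * (c₂ p.1.2 * ((1:ℂ) - u) ^ p.1.2)
                * ((q * u * ((1:ℂ) - u)) ^ p.2 / Γp p.2)) := by
          rw [hfin.tsum_eq]
          try ring
      _ = ∑' p : (ℕ × ℕ) × ℕ, F p u := tsum_congr hterm
  -- assemble everything
  rw [intervalIntegral.integral_of_le zero_le_one, integral_Ioc_eq_integral_Ioo,
    setIntegral_congr_fun measurableSet_Ioo hpt,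
    ← integral_tsum_of_summable_integral_norm (fun p => hInt p) hFsum]
  have hTs : Summable T := by
    refine Summable.of_norm_bounded hFsum fun p => ?_
    rw [← hval p]
    exact norm_integral_le_integral_norm _
  have h1 : HasSum (fun rs : ℕ × ℕ => ∑' k : ℕ, T (rs, k)) (∑' p, T p) :=
    hTs.hasSum.prod_fiberwise fun rs => (hTs.prod_factor rs).hasSum
  have h2 : HasSum (fun r : ℕ => ∑' s : ℕ, ∑' k : ℕ, T ((r, s), k)) (∑' p, T p) :=
    h1.prod_fiberwise fun r => (h1.summable.prod_factor r).hasSum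
  refine ((tsum_congr hval).trans h2.tsum_eq.symm).trans ?_
  refine tsum_congr fun r => tsum_congr fun s => tsum_congr fun k => ?_
  simp only [hT, hc₁, hc₂, hc₃]
  rw [show η₁ + (r:ℂ) + k + (η₂ + (s:ℂ) + k) = η₁ + η₂ + r + s + 2 * k by ring]
  ring
end

section
/- Let l ≥ 1 be an integer, ε₁,…,ε_l > 0, ω₁,…,ω_l ∈ ℝ, let η₁, η₂ ∈ ℂ with Re(η₁) > 0 and Re(η₂) > 0, let q ∈ ℂ, let a₁ < a₂ be real numbers, and let ξ > −1, σ > −1 be real. Set h(u) = (a₂−a₁) + ξ(u−a₁) + σ(a₂−u), which is positive on [a₁, a₂]. Then ∫_{a₁}^{a₂} (u−a₁)^{η₁−1} (a₂−u)^{η₂−1} h(u)^{−(η₁+η₂)} E_{(ε_i),(ω_i)}(q·(u−a₁)(a₂−u)/h(u)²) du = [(ξ+1)^{−η₁} (σ+1)^{−η₂} / (a₂−a₁)] · Σ_{k=0}^∞ Γ(η₁+k) Γ(η₂+k) / (Γ(ω₁+ε₁k)⋯Γ(ω_l+ε_l k) · Γ(η₁+η₂+2k)) · (q/((ξ+1)(σ+1)))^k.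 -/
open MeasureTheory Set Filter Topology
open scoped ENNReal NNReal

private lemma one_le_Gamma_of_two_le {x : ℝ} (hx : 2 ≤ x) : 1 ≤ Real.Gamma x := by
  rcases eq_or_lt_of_le hx with h | h
  · rw [← h, Real.Gamma_two]
  · have := Real.Gamma_strictMonoOn_Ici (mem_Ici.2 le_rfl) (mem_Ici.2 hx) h
    rw [Real.Gamma_two] at this; exact this.le

private lemma Gamma_growth {x e : ℝ} (hx : 2 ≤ x) (he : 0 < e) :
    Real.Gamma x * (x - 1) ^ e ≤ Real.Gamma (x + e) := by
  have hx0 : (0:ℝ) < x - 1 := by linarith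
  have hxpos : (0:ℝ) < x := by linarith
  have hs := Real.convexOn_log_Gamma.slope_mono_adjacent
    (show x - 1 ∈ Ioi (0:ℝ) by simpa using hx0)
    (show x + e ∈ Ioi (0:ℝ) by simp; linarith)
    (show x - 1 < x by linarith) (show x < x + e by linarith)
  simp only [Function.comp_apply] at hs
  have hG : Real.Gamma x = (x - 1) * Real.Gamma (x - 1) := by
    have := Real.Gamma_add_one hx0.ne'
    simpa using this
  have hGpos : 0 < Real.Gamma (x - 1) := Real.Gamma_pos_of_pos hx0
  have hGxpos : 0 < Real.Gamma x := Real.Gamma_pos_of_pos hxpos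
  have h1 : Real.log (Real.Gamma x) - Real.log (Real.Gamma (x-1)) = Real.log (x - 1) := by
    rw [hG, Real.log_mul hx0.ne' hGpos.ne']; ring
  rw [show x + e - x = e by ring, h1] at hs
  have h2 : e * Real.log (x - 1) + Real.log (Real.Gamma x)
      ≤ Real.log (Real.Gamma (x + e)) := by
    rw [show x - (x - 1) = 1 by ring, div_one, le_div_iff₀ he] at hs
    nlinarith [hs]
  have := Real.exp_le_exp.2 h2
  rw [Real.exp_add, Real.exp_log hGxpos,
    Real.exp_log (Real.Gamma_pos_of_pos (by linarith : (0:ℝ) < x + e))] at this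
  calc Real.Gamma x * (x - 1) ^ e
      = Real.exp (e * Real.log (x - 1)) * Real.Gamma x := by
        rw [Real.rpow_def_of_pos hx0, mul_comm e]; ring
    _ ≤ Real.Gamma (x + e) := this

private lemma summable_aux (l : ℕ) (hl : 1 ≤ l) (ε ω : Fin l → ℝ) (hε : ∀ i, 0 < ε i)
    {r : ℝ} (hr : 0 ≤ r) :
    Summable (fun k : ℕ => r ^ k / ∏ i, |Real.Gamma (ω i + ε i * k)|) := by
  set i0 : Fin l := ⟨0, hl⟩
  set P : ℕ → ℝ := fun k => ∏ i, |Real.Gamma (ω i + ε i * k)| with hP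
  have htend : ∀ i : Fin l, Tendsto (fun k : ℕ => ω i + ε i * (k : ℝ)) atTop atTop := by
    intro i
    exact tendsto_atTop_add_const_left _ _
      ((tendsto_natCast_atTop_atTop).const_mul_atTop (hε i))
  have hA : ∀ᶠ k : ℕ in atTop, ∀ i, 2 ≤ ω i + ε i * k :=
    eventually_all.2 fun i => (htend i).eventually (eventually_ge_atTop 2)
  have hB : ∀ᶠ k : ℕ in atTop, 2 * r + 1 ≤ (ω i0 + ε i0 * k - 1) ^ (ε i0) := by
    have : Tendsto (fun k : ℕ => (ω i0 + ε i0 * (k : ℝ) - 1) ^ (ε i0)) atTop atTop :=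
      (tendsto_rpow_atTop (hε i0)).comp
        (tendsto_atTop_add_const_right _ _ (htend i0))
    exact this.eventually (eventually_ge_atTop _)
  refine summable_of_ratio_norm_eventually_le (r := 1/2) (by norm_num) ?_
  filter_upwards [hA, hB] with k h2 hB'
  have hx : ∀ i : Fin l, 2 ≤ ω i + ε i * (k:ℝ) := h2
  have hGpos : ∀ i : Fin l, 0 < Real.Gamma (ω i + ε i * k) :=
    fun i => Real.Gamma_pos_of_pos (by linarith [hx i])
  have hPk : P k = ∏ i, Real.Gamma (ω i + ε i * k) :=
    Finset.prod_congr rfl fun i _ => abs_of_pos (hGpos i)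
  have hPpos : 0 < P k := by
    rw [hPk]; exact Finset.prod_pos fun i _ => hGpos i
  have hstep : ∀ i : Fin l, Real.Gamma (ω i + ε i * k)
      ≤ Real.Gamma (ω i + ε i * (k + 1 : ℕ)) := by
    intro i
    have h1 : ω i + ε i * ((k:ℝ) + 1) = (ω i + ε i * k) + ε i := by ring
    push_cast [h1]
    refine le_trans ?_ (Gamma_growth (hx i) (hε i))
    refine le_mul_of_one_le_right (hGpos i).le ?_
    exact Real.one_le_rpow (by linarith [hx i]) (hε i).le
  have hstep0 : (2 * r + 1) * Real.Gamma (ω i0 + ε i0 * k)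
      ≤ Real.Gamma (ω i0 + ε i0 * (k + 1 : ℕ)) := by
    have h1 : ω i0 + ε i0 * ((k:ℝ) + 1) = (ω i0 + ε i0 * k) + ε i0 := by ring
    push_cast [h1]
    refine le_trans ?_ (Gamma_growth (hx i0) (hε i0))
    rw [mul_comm]
    exact mul_le_mul_of_nonneg_left hB' (hGpos i0).le
  have hPk1 : (2 * r + 1) * P k ≤ P (k + 1) := by
    have hP1 : P (k+1) = ∏ i, Real.Gamma (ω i + ε i * (k+1 : ℕ)) := by
      refine Finset.prod_congr rfl fun i _ => abs_of_pos ?_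
      refine Real.Gamma_pos_of_pos ?_
      push_cast
      nlinarith [hx i, hε i]
    rw [hPk, hP1, ← Finset.mul_prod_erase Finset.univ _ (Finset.mem_univ i0),
      ← Finset.mul_prod_erase Finset.univ
        (fun i => Real.Gamma (ω i + ε i * (k+1 : ℕ))) (Finset.mem_univ i0), ← mul_assoc]
    refine mul_le_mul hstep0 (Finset.prod_le_prod (fun i _ => (hGpos i).le)
      (fun i _ => hstep i)) (Finset.prod_nonneg fun i _ => (hGpos i).le)
      (Real.Gamma_pos_of_pos (by push_cast; nlinarith [hx i0, hε i0])).le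
  have hP1pos : 0 < P (k + 1) := lt_of_lt_of_le (by nlinarith [hPpos]) hPk1
  rw [Real.norm_of_nonneg (by positivity), Real.norm_of_nonneg (by positivity)]
  calc r ^ (k+1) / P (k+1) ≤ r ^ (k+1) / ((2*r+1) * P k) := by
        apply div_le_div_of_nonneg_left (by positivity) (by nlinarith [hPpos]) hPk1
    _ = (r / (2*r+1)) * (r ^ k / P k) := by
        rw [pow_succ, div_mul_div_comm]
        congr 1
        ring
    _ ≤ (1/2) * (r ^ k / P k) := by
        refine mul_le_mul_of_nonneg_right ?_ (by positivity)
        rw [div_le_div_iff₀ (by linarith) (by norm_num)]; linarith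

private lemma cpow_pos_eq {w : ℝ} (hw : 0 < w) (z : ℂ) :
    ((w : ℝ) : ℂ) ^ z = Complex.exp ((Real.log w : ℂ) * z) := by
  rw [Complex.cpow_def_of_ne_zero (by exact_mod_cast hw.ne'), Complex.ofReal_log hw.le]

private lemma ofReal_pos_eq {w : ℝ} (hw : 0 < w) :
    ((w : ℝ) : ℂ) = Complex.exp ((Real.log w : ℂ)) := by
  rw [← Complex.ofReal_exp, Real.exp_log hw]

private lemma pointwise_eq (α β : ℂ) (c A B s dd : ℝ) (hc : 0 < c) (hA : 0 < A)
    (hB : 0 < B) (hs0 : 0 < s) (hs1 : s < 1) (hdd : 0 < dd) :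
    |c*A*B/dd^2| • (((c*B*s/dd : ℝ):ℂ)^(α-1) * ((c*A*(1-s)/dd : ℝ):ℂ)^(β-1)
        * ((c*A*B/dd : ℝ):ℂ)^(-(α+β)))
    = (A:ℂ)^(-α) * (B:ℂ)^(-β) / (c:ℂ)
        * (((s:ℝ):ℂ)^(α-1) * ((1:ℂ) - (s:ℝ))^(β-1)) := by
  have h1s : (0:ℝ) < 1 - s := by linarith
  have e1 : ((1:ℂ) - (s:ℝ)) = (((1 - s : ℝ)):ℂ) := by push_cast; ring
  rw [abs_of_pos (by positivity), Complex.real_smul, e1,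
    cpow_pos_eq (show (0:ℝ) < c*B*s/dd by positivity),
    cpow_pos_eq (show (0:ℝ) < c*A*(1-s)/dd by positivity),
    cpow_pos_eq (show (0:ℝ) < c*A*B/dd by positivity),
    cpow_pos_eq hA, cpow_pos_eq hB, cpow_pos_eq hs0, cpow_pos_eq h1s,
    ofReal_pos_eq (show (0:ℝ) < c*A*B/dd^2 by positivity),
    ofReal_pos_eq hc]
  have l1 : Real.log (c*B*s/dd) = Real.log c + Real.log B + Real.log s - Real.log dd := by
    rw [Real.log_div (by positivity) hdd.ne', Real.log_mul (by positivity) hs0.ne',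
      Real.log_mul hc.ne' hB.ne']
  have l2 : Real.log (c*A*(1-s)/dd) = Real.log c + Real.log A + Real.log (1-s) - Real.log dd := by
    rw [Real.log_div (by positivity) hdd.ne', Real.log_mul (by positivity) h1s.ne',
      Real.log_mul hc.ne' hA.ne']
  have l3 : Real.log (c*A*B/dd) = Real.log c + Real.log A + Real.log B - Real.log dd := by
    rw [Real.log_div (by positivity) hdd.ne', Real.log_mul (by positivity) hB.ne',
      Real.log_mul hc.ne' hA.ne']
  have l4 : Real.log (c*A*B/dd^2) = Real.log c + Real.log A + Real.log B - 2*Real.log dd := by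
    rw [Real.log_div (by positivity) (by positivity), Real.log_mul (by positivity) hB.ne',
      Real.log_mul hc.ne' hA.ne', Real.log_pow]
    push_cast; ring
  rw [l1, l2, l3, l4]
  simp only [div_eq_mul_inv, ← Complex.exp_neg, ← Complex.exp_add]
  congr 1
  push_cast
  ring

private lemma keyIntegral (α β : ℂ) (hα : 0 < α.re) (hβ : 0 < β.re)
    (A B : ℝ) (hA : 0 < A) (hB : 0 < B) (a₁ a₂ : ℝ) (h12 : a₁ < a₂) :
    IntegrableOn (fun u : ℝ => ((u - a₁ : ℝ) : ℂ) ^ (α - 1) * ((a₂ - u : ℝ) : ℂ) ^ (β - 1)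
        * ((A * (u - a₁) + B * (a₂ - u) : ℝ) : ℂ) ^ (-(α + β))) (Ioo a₁ a₂)
    ∧ (∫ u in Ioo a₁ a₂, ((u - a₁ : ℝ) : ℂ) ^ (α - 1) * ((a₂ - u : ℝ) : ℂ) ^ (β - 1)
        * ((A * (u - a₁) + B * (a₂ - u) : ℝ) : ℂ) ^ (-(α + β))
    = Complex.Gamma α * Complex.Gamma β / Complex.Gamma (α + β)
      * (A : ℂ) ^ (-α) * (B : ℂ) ^ (-β) / ((a₂ - a₁ : ℝ) : ℂ)) := by
  set c : ℝ := a₂ - a₁ with hc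
  have hc0 : 0 < c := by simp [hc]; linarith
  set d : ℝ → ℝ := fun s => A + (B - A) * s with hd
  set φ : ℝ → ℝ := fun s => a₁ + c * B * s / d s with hφ
  have hds : ∀ s : ℝ, 0 ≤ s → s ≤ 1 → 0 < d s := by
    intro s h0 h1; simp only [hd]
    nlinarith [mul_nonneg (sub_nonneg.2 h1) hA.le, mul_nonneg h0 hB.le]
  have hder : ∀ s ∈ Ioo (0:ℝ) 1, HasDerivWithinAt φ (c*A*B/(d s)^2) (Ioo (0:ℝ) 1) s := by
    intro s hs
    have hds' : d s ≠ 0 := (hds s hs.1.le hs.2.le).ne'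
    have h1 : HasDerivAt (fun s : ℝ => c * B * s) (c * B) s := by
      simpa using (hasDerivAt_id s).const_mul (c * B)
    have h2 : HasDerivAt d (B - A) s := by
      have := ((hasDerivAt_id s).const_mul (B - A)).const_add A
      rw [mul_one] at this
      exact this
    have h3 := (h1.div h2 hds').const_add a₁
    have heq : (c * B * d s - c * B * s * (B - A)) / d s ^ 2 = c * A * B / d s ^ 2 := by
      congr 1
      simp only [hd]
      ring
    exact (h3.congr_deriv heq).hasDerivWithinAt
  have hinj : InjOn φ (Ioo (0:ℝ) 1) := by
    intro s hs t ht h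
    have hds' : d s ≠ 0 := (hds s hs.1.le hs.2.le).ne'
    have hdt' : d t ≠ 0 := (hds t ht.1.le ht.2.le).ne'
    have h' : c * B * s * d t = c * B * t * d s := by
      simp only [hφ] at h; rw [add_right_inj, div_eq_div_iff hds' hdt'] at h
      linarith [h]
    have h2 : (c*B*A) * s = (c*B*A) * t := by
      simp only [hd] at h'; linear_combination h'
    exact mul_left_cancel₀ (by positivity) h2
  have himg : φ '' Ioo (0:ℝ) 1 = Ioo a₁ a₂ := by
    apply Subset.antisymm
    · rintro - ⟨s, hs, rfl⟩
      have hds0 : 0 < d s := hds s hs.1.le hs.2.le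
      constructor
      · have : 0 < c * B * s / d s := by
          have := hs.1; positivity
        simp only [hφ]; linarith
      · have hy : a₂ - φ s = c * A * (1 - s) / d s := by
          have hne : A + (B - A) * s ≠ 0 := hds0.ne'
          simp only [hφ, hd, hc]
          rw [eq_div_iff hne, sub_mul, add_mul, div_mul_cancel₀ _ hne]; ring
        have : 0 < c * A * (1 - s) / d s := by
          have h1 : (0:ℝ) < 1 - s := by linarith [hs.2]
          positivity
        linarith [hy ▸ this]
    · rintro u hu
      have h1 : 0 < u - a₁ := by linarith [hu.1]
      have h2 : 0 < a₂ - u := by linarith [hu.2]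
      set D : ℝ := A * (u - a₁) + B * (a₂ - u) with hD
      have hD0 : 0 < D := by positivity
      refine ⟨A * (u - a₁) / D, ⟨by positivity, ?_⟩, ?_⟩
      · rw [div_lt_one hD0, hD]; nlinarith
      · have hdv : d (A * (u - a₁) / D) = A * B * c / D := by
          simp only [hd, hc]; field_simp; ring
        simp only [hφ, hdv]
        field_simp
        ring
  have hcongr : ∀ s ∈ Ioo (0:ℝ) 1,
      |c*A*B/(d s)^2| • (((φ s - a₁ : ℝ) : ℂ) ^ (α - 1) * ((a₂ - φ s : ℝ) : ℂ) ^ (β - 1)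
        * ((A * (φ s - a₁) + B * (a₂ - φ s) : ℝ) : ℂ) ^ (-(α + β)))
      = (A:ℂ)^(-α) * (B:ℂ)^(-β) / (c:ℂ)
        * (((s:ℝ):ℂ)^(α-1) * ((1:ℂ) - (s:ℝ))^(β-1)) := by
    intro s hs
    have hds0 : 0 < d s := hds s hs.1.le hs.2.le
    have hX : φ s - a₁ = c*B*s/(d s) := by simp [hφ]
    have hY : a₂ - φ s = c*A*(1-s)/(d s) := by
      have hne : A + (B - A) * s ≠ 0 := hds0.ne'
      simp only [hφ, hd, hc]
      rw [eq_div_iff hne, sub_mul, add_mul, div_mul_cancel₀ _ hne]; ring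
    have hH : A * (φ s - a₁) + B * (a₂ - φ s) = c*A*B/(d s) := by
      rw [hX, hY]; field_simp; ring
    rw [hH, hX, hY]
    exact pointwise_eq α β c A B s (d s) hc0 hA hB hs.1 hs.2 hds0
  have hbint : IntegrableOn (fun s : ℝ => (A:ℂ)^(-α) * (B:ℂ)^(-β) / (c:ℂ)
      * (((s:ℝ):ℂ)^(α-1) * ((1:ℂ) - (s:ℝ))^(β-1))) (Ioo (0:ℝ) 1) := by
    have h := (Complex.betaIntegral_convergent hα hβ).const_mul
      ((A:ℂ)^(-α) * (B:ℂ)^(-β) / (c:ℂ))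
    rw [intervalIntegrable_iff_integrableOn_Ioo_of_le zero_le_one] at h
    exact h
  constructor
  · rw [← himg,
      integrableOn_image_iff_integrableOn_abs_deriv_smul measurableSet_Ioo hder hinj]
    exact hbint.congr_fun (fun s hs => (hcongr s hs).symm) measurableSet_Ioo
  · rw [← himg, integral_image_eq_integral_abs_deriv_smul measurableSet_Ioo hder hinj]
    rw [setIntegral_congr_fun measurableSet_Ioo hcongr]
    rw [integral_const_mul]
    have hbeta : (∫ s in Ioo (0:ℝ) 1, ((s:ℝ):ℂ)^(α-1) * ((1:ℂ) - (s:ℝ))^(β-1))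
        = Complex.betaIntegral α β := by
      rw [Complex.betaIntegral, intervalIntegral.integral_of_le zero_le_one,
        ← integral_Ioc_eq_integral_Ioo]
    have hΓ : Complex.Gamma α * Complex.Gamma β
        = Complex.Gamma (α + β) * Complex.betaIntegral α β :=
      Complex.Gamma_mul_Gamma_eq_betaIntegral hα hβ
    have hΓne : Complex.Gamma (α + β) ≠ 0 :=
      Complex.Gamma_ne_zero_of_re_pos (by simp [Complex.add_re]; linarith)
    have hb : Complex.betaIntegral α β
        = Complex.Gamma α * Complex.Gamma β / Complex.Gamma (α + β) := by
      rw [hΓ, mul_div_cancel_left₀ _ hΓne]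
    rw [hbeta, hb]
    ring

private lemma term_rearrange (x y h w P γ₁ γ₂ : ℂ) (k : ℕ) (hx : x ≠ 0) (hy : y ≠ 0)
    (hh : h ≠ 0) :
    x^(γ₁-1) * y^(γ₂-1) * h^(-(γ₁+γ₂)) * ((w * x * y / h^2)^k / P)
    = (w^k / P) * (x^((γ₁+k)-1) * y^((γ₂+k)-1) * h^(-((γ₁+k)+(γ₂+k)))) := by
  rw [show (γ₁+(k:ℂ))-1 = (γ₁-1) + (k:ℂ) by ring, Complex.cpow_add _ _ hx,
    Complex.cpow_natCast,
    show (γ₂+(k:ℂ))-1 = (γ₂-1) + (k:ℂ) by ring, Complex.cpow_add _ _ hy,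
    Complex.cpow_natCast,
    show -((γ₁+(k:ℂ))+(γ₂+(k:ℂ))) = -(γ₁+γ₂) + (-((2*k : ℕ):ℂ)) by push_cast; ring,
    Complex.cpow_add _ _ hh, Complex.cpow_neg h ((2*k : ℕ):ℂ),
    Complex.cpow_natCast h (2*k), pow_mul]
  ring

open Complex

/-- Theorem 2.4: beta-type integral with kernel `h(u)^{-(η₁+η₂)}`,
`h(u) = (a₂-a₁) + ξ(u-a₁) + σ(a₂-u)`, against the multi-index Mittag-Leffler
function `E_{(εᵢ),(ωᵢ)}(q (u-a₁)(a₂-u)/h(u)²)`. -/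
theorem beta_integral_selberg_type_multiML
    (l : ℕ) (hl : 1 ≤ l) (ε ω : Fin l → ℝ) (hε : ∀ i, 0 < ε i)
    (η₁ η₂ q : ℂ) (hη₁ : 0 < η₁.re) (hη₂ : 0 < η₂.re)
    (a₁ a₂ ξ σ : ℝ) (ha : a₁ < a₂) (hξ : -1 < ξ) (hσ : -1 < σ) :
    (∫ u in a₁..a₂, ((u - a₁ : ℝ) : ℂ) ^ (η₁ - 1) * ((a₂ - u : ℝ) : ℂ) ^ (η₂ - 1)
        * (((a₂ - a₁) + ξ * (u - a₁) + σ * (a₂ - u) : ℝ) : ℂ) ^ (-(η₁ + η₂))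
        * ∑' k : ℕ,
            (q * ((u - a₁ : ℝ) : ℂ) * ((a₂ - u : ℝ) : ℂ)
              / (((a₂ - a₁) + ξ * (u - a₁) + σ * (a₂ - u) : ℝ) : ℂ) ^ 2) ^ k
            / ∏ i, Complex.Gamma (((ω i + ε i * k : ℝ) : ℂ)))
    = ((ξ + 1 : ℝ) : ℂ) ^ (-η₁) * ((σ + 1 : ℝ) : ℂ) ^ (-η₂) / ((a₂ - a₁ : ℝ) : ℂ)
      * ∑' k : ℕ,
          Complex.Gamma (η₁ + k) * Complex.Gamma (η₂ + k)
            / ((∏ i, Complex.Gamma (((ω i + ε i * k : ℝ) : ℂ)))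
                * Complex.Gamma (η₁ + η₂ + 2 * k))
          * (q / (((ξ + 1) * (σ + 1) : ℝ) : ℂ)) ^ k := by
  set A : ℝ := ξ + 1 with hA'
  set B : ℝ := σ + 1 with hB'
  have hA0 : 0 < A := by rw [hA']; linarith
  have hB0 : 0 < B := by rw [hB']; linarith
  have hc0 : (0:ℝ) < a₂ - a₁ := by linarith
  have hHeq : ∀ u : ℝ, (a₂ - a₁) + ξ * (u - a₁) + σ * (a₂ - u)
      = A * (u - a₁) + B * (a₂ - u) := fun u => by rw [hA', hB']; ring
  simp only [hHeq]
  rw [intervalIntegral.integral_of_le ha.le, integral_Ioc_eq_integral_Ioo]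
  set F : ℕ → ℝ → ℂ := fun k u =>
    ((u - a₁ : ℝ) : ℂ) ^ (η₁ - 1) * ((a₂ - u : ℝ) : ℂ) ^ (η₂ - 1)
      * ((A * (u - a₁) + B * (a₂ - u) : ℝ) : ℂ) ^ (-(η₁ + η₂))
      * ((q * ((u - a₁ : ℝ) : ℂ) * ((a₂ - u : ℝ) : ℂ)
            / ((A * (u - a₁) + B * (a₂ - u) : ℝ) : ℂ) ^ 2) ^ k
          / ∏ i, Complex.Gamma (((ω i + ε i * k : ℝ) : ℂ))) with hF
  set g₀ : ℝ → ℂ := fun u =>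
    ((u - a₁ : ℝ) : ℂ) ^ (η₁ - 1) * ((a₂ - u : ℝ) : ℂ) ^ (η₂ - 1)
      * ((A * (u - a₁) + B * (a₂ - u) : ℝ) : ℂ) ^ (-(η₁ + η₂)) with hg₀
  have hg₀int : IntegrableOn g₀ (Ioo a₁ a₂) :=
    (keyIntegral η₁ η₂ hη₁ hη₂ A B hA0 hB0 a₁ a₂ ha).1
  -- basic positivity on Ioo
  have hXpos : ∀ u ∈ Ioo a₁ a₂, (0:ℝ) < u - a₁ := fun u hu => by linarith [hu.1]
  have hYpos : ∀ u ∈ Ioo a₁ a₂, (0:ℝ) < a₂ - u := fun u hu => by linarith [hu.2]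
  have hHpos : ∀ u ∈ Ioo a₁ a₂, (0:ℝ) < A * (u - a₁) + B * (a₂ - u) := fun u hu => by
    have := hXpos u hu; have := hYpos u hu; positivity
  -- measurability
  have hFmeas : ∀ k : ℕ, AEStronglyMeasurable (F k) (volume.restrict (Ioo a₁ a₂)) := by
    intro k
    refine ContinuousOn.aestronglyMeasurable ?_ measurableSet_Ioo
    have hcX : ContinuousOn (fun u : ℝ => ((u - a₁ : ℝ) : ℂ)) (Ioo a₁ a₂) :=
      (Complex.continuous_ofReal.comp (continuous_id.sub continuous_const)).continuousOn
    have hcY : ContinuousOn (fun u : ℝ => ((a₂ - u : ℝ) : ℂ)) (Ioo a₁ a₂) :=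
      (Complex.continuous_ofReal.comp (continuous_const.sub continuous_id)).continuousOn
    have hcH : ContinuousOn (fun u : ℝ => ((A * (u - a₁) + B * (a₂ - u) : ℝ) : ℂ))
        (Ioo a₁ a₂) :=
      (Complex.continuous_ofReal.comp (by continuity)).continuousOn
    have hX' := hcX.cpow_const (b := η₁ - 1) (fun u hu => by
      rw [Complex.mem_slitPlane_iff]; left; simpa using hXpos u hu)
    have hY' := hcY.cpow_const (b := η₂ - 1) (fun u hu => by
      rw [Complex.mem_slitPlane_iff]; left; simpa using hYpos u hu)
    have hH' := hcH.cpow_const (b := -(η₁ + η₂)) (fun u hu => by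
      rw [Complex.mem_slitPlane_iff]; left; simpa using hHpos u hu)
    have hT : ContinuousOn (fun u : ℝ => q * ((u - a₁ : ℝ) : ℂ) * ((a₂ - u : ℝ) : ℂ)
        / ((A * (u - a₁) + B * (a₂ - u) : ℝ) : ℂ) ^ 2) (Ioo a₁ a₂) := by
      refine ((continuousOn_const.mul hcX).mul hcY).div (hcH.pow 2) fun u hu => ?_
      exact pow_ne_zero _ (by exact_mod_cast (hHpos u hu).ne')
    exact ((hX'.mul hY').mul hH').mul ((hT.pow k).div_const _)
  -- norm of the Gamma product
  have hnormΓ : ∀ k : ℕ, ‖∏ i, Complex.Gamma (((ω i + ε i * k : ℝ) : ℂ))‖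
      = ∏ i, |Real.Gamma (ω i + ε i * k)| := by
    intro k
    rw [norm_prod]
    exact Finset.prod_congr rfl fun i _ => by
      rw [Complex.Gamma_ofReal, Complex.norm_real, Real.norm_eq_abs]
  set r : ℝ := ‖q‖ / (4*A*B) with hr
  have hr0 : 0 ≤ r := by positivity
  set cc : ℕ → ℝ := fun k => r^k / ∏ i, |Real.Gamma (ω i + ε i * k)| with hcc
  have hccsum : Summable cc := summable_aux l hl ε ω hε hr0
  have hcc0 : ∀ k, 0 ≤ cc k := fun k => by
    apply div_nonneg (by positivity) (Finset.prod_nonneg fun i _ => abs_nonneg _)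
  -- pointwise norm bound
  have hbound : ∀ k : ℕ, ∀ u ∈ Ioo a₁ a₂, ‖F k u‖ ≤ cc k * ‖g₀ u‖ := by
    intro k u hu
    have hX := hXpos u hu; have hY := hYpos u hu; have hH := hHpos u hu
    have hT : ‖q * ((u - a₁ : ℝ) : ℂ) * ((a₂ - u : ℝ) : ℂ)
        / ((A * (u - a₁) + B * (a₂ - u) : ℝ) : ℂ) ^ 2‖ ≤ r := by
      rw [norm_div, norm_mul, norm_mul, norm_pow, Complex.norm_real, Complex.norm_real,
        Complex.norm_real, Real.norm_eq_abs, Real.norm_eq_abs, Real.norm_eq_abs,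
        abs_of_pos hX, abs_of_pos hY, abs_of_pos hH]
      have key : (u - a₁) * (a₂ - u) / (A * (u - a₁) + B * (a₂ - u)) ^ 2
          ≤ 1 / (4*A*B) := by
        rw [div_le_div_iff₀ (by positivity) (by positivity)]
        nlinarith [sq_nonneg (A * (u - a₁) - B * (a₂ - u))]
      calc ‖q‖ * (u - a₁) * (a₂ - u) / (A * (u - a₁) + B * (a₂ - u)) ^ 2
          = ‖q‖ * ((u - a₁) * (a₂ - u) / (A * (u - a₁) + B * (a₂ - u)) ^ 2) := by ring
        _ ≤ ‖q‖ * (1 / (4*A*B)) :=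
            mul_le_mul_of_nonneg_left key (norm_nonneg q)
        _ = r := by rw [hr]; ring
    have : ‖F k u‖ = ‖g₀ u‖ * (‖q * ((u - a₁ : ℝ) : ℂ) * ((a₂ - u : ℝ) : ℂ)
        / ((A * (u - a₁) + B * (a₂ - u) : ℝ) : ℂ) ^ 2‖ ^ k
          / ∏ i, |Real.Gamma (ω i + ε i * k)|) := by
      rw [hF, hg₀]
      simp only [norm_mul, norm_div, norm_pow, hnormΓ k]
    rw [this, hcc, mul_comm (r ^ k / _) ‖g₀ u‖]
    refine mul_le_mul_of_nonneg_left ?_ (norm_nonneg _)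
    rw [div_eq_mul_inv, div_eq_mul_inv]
    exact mul_le_mul_of_nonneg_right (pow_le_pow_left₀ (norm_nonneg _) hT k)
      (inv_nonneg.2 (Finset.prod_nonneg fun i _ => abs_nonneg _))
  -- finiteness of the lintegrals
  have hg₀fin : (∫⁻ u in Ioo a₁ a₂, (‖g₀ u‖₊ : ℝ≥0∞)) ≠ ⊤ :=
    lt_top_iff_ne_top.mp hg₀int.2
  have hlint : (∑' k : ℕ, ∫⁻ u in Ioo a₁ a₂, (‖F k u‖₊ : ℝ≥0∞)) ≠ ⊤ := by
    have hle : ∀ k : ℕ, (∫⁻ u in Ioo a₁ a₂, (‖F k u‖₊ : ℝ≥0∞))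
        ≤ ENNReal.ofReal (cc k) * ∫⁻ u in Ioo a₁ a₂, (‖g₀ u‖₊ : ℝ≥0∞) := by
      intro k
      rw [← lintegral_const_mul' _ _ ENNReal.ofReal_ne_top]
      refine lintegral_mono_ae
        ((ae_restrict_iff' measurableSet_Ioo).2 (ae_of_all _ fun u hu => ?_))
      calc (‖F k u‖₊ : ℝ≥0∞) = ENNReal.ofReal ‖F k u‖ := (ofReal_norm_eq_enorm _).symm
        _ ≤ ENNReal.ofReal (cc k * ‖g₀ u‖) := ENNReal.ofReal_le_ofReal (hbound k u hu)
        _ = ENNReal.ofReal (cc k) * ENNReal.ofReal ‖g₀ u‖ := ENNReal.ofReal_mul (hcc0 k)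
        _ = ENNReal.ofReal (cc k) * ‖g₀ u‖₊ := by rw [ofReal_norm_eq_enorm]; rfl
    refine ne_top_of_le_ne_top ?_ (ENNReal.tsum_le_tsum hle)
    rw [ENNReal.tsum_mul_right]
    exact ENNReal.mul_ne_top
      (by rw [← ENNReal.ofReal_tsum_of_nonneg hcc0 hccsum]; exact ENNReal.ofReal_ne_top)
      hg₀fin
  -- swap integral and sum
  trans (∑' k : ℕ, ∫ u in Ioo a₁ a₂, F k u)
  · rw [← integral_tsum hFmeas hlint]
    refine setIntegral_congr_fun measurableSet_Ioo fun u hu => ?_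
    simp only [hF]
    exact (tsum_mul_left).symm
  -- evaluate each term
  rw [← tsum_mul_left]
  refine tsum_congr fun k => ?_
  have hre1 : 0 < (η₁ + (k:ℂ)).re := by
    simp only [Complex.add_re, Complex.natCast_re]
    positivity
  have hre2 : 0 < (η₂ + (k:ℂ)).re := by
    simp only [Complex.add_re, Complex.natCast_re]
    positivity
  have hkey := (keyIntegral (η₁ + k) (η₂ + k) hre1 hre2 A B hA0 hB0 a₁ a₂ ha).2
  have hstep : (∫ u in Ioo a₁ a₂, F k u)
      = (q ^ k / ∏ i, Complex.Gamma (((ω i + ε i * k : ℝ) : ℂ))) *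
        ∫ u in Ioo a₁ a₂,
          ((u - a₁ : ℝ) : ℂ) ^ ((η₁ + k) - 1) * ((a₂ - u : ℝ) : ℂ) ^ ((η₂ + k) - 1)
          * ((A * (u - a₁) + B * (a₂ - u) : ℝ) : ℂ) ^ (-((η₁ + k) + (η₂ + k))) := by
    rw [← integral_const_mul]
    refine setIntegral_congr_fun measurableSet_Ioo fun u hu => ?_
    simp only [hF]
    exact term_rearrange _ _ _ q _ η₁ η₂ k
      (by exact_mod_cast (hXpos u hu).ne') (by exact_mod_cast (hYpos u hu).ne')
      (by exact_mod_cast (hHpos u hu).ne')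
  rw [hstep, hkey]
  rw [show (η₁ + (k:ℂ)) + (η₂ + (k:ℂ)) = η₁ + η₂ + 2 * (k:ℂ) by ring,
    show -(η₁ + (k:ℂ)) = -η₁ + -(k:ℂ) by ring,
    show -(η₂ + (k:ℂ)) = -η₂ + -(k:ℂ) by ring,
    Complex.cpow_add _ _ (by exact_mod_cast hA0.ne' : (A:ℂ) ≠ 0),
    Complex.cpow_add _ _ (by exact_mod_cast hB0.ne' : (B:ℂ) ≠ 0),
    Complex.cpow_neg ((A:ℝ):ℂ) ((k:ℕ):ℂ), Complex.cpow_neg ((B:ℝ):ℂ) ((k:ℕ):ℂ),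
    Complex.cpow_natCast, Complex.cpow_natCast,
    Complex.ofReal_mul, div_pow, mul_pow]
  ring
end

section
/- Let η₁, η₂ ∈ ℂ with Re(η₁) > 0 and Re(η₂) > 0, let β₁, β₂ ∈ ℂ, and let z₁, z₂ ∈ ℂ with |z₁| < 1 and |z₂| < 1. Then ∫₀¹ u^{η₁−1} (1−u)^{η₂−1} (1−z₁u)^{−β₁} (1−z₂u)^{−β₂} du = B(η₁, η₂) · F₁(η₁, β₁, β₂; η₁+η₂; z₁, z₂), where F₁(a, b, b′; c; x, y) = Σ_{r=0}^∞ Σ_{s=0}^∞ (a)_{r+s} (b)_r (b′)_s x^r y^s / ((c)_{r+s} r! s!) is the first Appell hypergeometric function. -/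
open Complex Polynomial

/-- The first Appell hypergeometric function `F₁(a, b, b'; c; x, y)`. -/
noncomputable def appellF1 (a b b' c x y : ℂ) : ℂ :=
  ∑' r : ℕ, ∑' s : ℕ,
    (ascPochhammer ℂ (r + s)).eval a * (ascPochhammer ℂ r).eval b
      * (ascPochhammer ℂ s).eval b' * x ^ r * y ^ s
      / ((ascPochhammer ℂ (r + s)).eval c * (r.factorial : ℂ) * (s.factorial : ℂ))

private lemma poch_succ (β : ℂ) (n : ℕ) :
    (ascPochhammer ℂ (n+1)).eval β = (ascPochhammer ℂ n).eval β * (β + n) := by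
  simp [ascPochhammer_succ_right]

private lemma poch_succ_real (b : ℝ) (n : ℕ) :
    (ascPochhammer ℝ (n+1)).eval b = (ascPochhammer ℝ n).eval b * (b + n) := by
  simp [ascPochhammer_succ_right]

private lemma poch_real_nonneg {b : ℝ} (hb : 0 ≤ b) (n : ℕ) :
    0 ≤ (ascPochhammer ℝ n).eval b := by
  induction n with
  | zero => simp
  | succ n ih => rw [poch_succ_real]; positivity

private lemma poch_norm_le (β : ℂ) (n : ℕ) :
    ‖(ascPochhammer ℂ n).eval β‖ ≤ (ascPochhammer ℝ n).eval ‖β‖ := by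
  induction n with
  | zero => simp
  | succ n ih =>
    rw [poch_succ, poch_succ_real, norm_mul]
    refine mul_le_mul ih ?_ (norm_nonneg _) (poch_real_nonneg (norm_nonneg β) n)
    calc ‖β + (n:ℂ)‖ ≤ ‖β‖ + ‖(n:ℂ)‖ := norm_add_le _ _
      _ = ‖β‖ + n := by simp

private lemma poch_ofReal (b : ℝ) (n : ℕ) :
    (ascPochhammer ℂ n).eval (b : ℂ) = (((ascPochhammer ℝ n).eval b : ℝ) : ℂ) := by
  rw [ascPochhammer_eval₂ (algebraMap ℝ ℂ) n (b:ℂ),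
    show ((b:ℂ)) = algebraMap ℝ ℂ b from rfl, Polynomial.eval₂_at_apply]
  rfl

private lemma poch_ne_zero {s : ℂ} (hs : 0 < s.re) (n : ℕ) :
    (ascPochhammer ℂ n).eval s ≠ 0 := by
  induction n with
  | zero => simp
  | succ n ih =>
    rw [poch_succ]
    refine mul_ne_zero ih (fun h => ?_)
    have : (s + n).re = 0 := by rw [h]; simp
    simp only [Complex.add_re, Complex.natCast_re] at this
    have : (0:ℝ) ≤ n := n.cast_nonneg
    linarith

private lemma Gamma_add_nat {s : ℂ} (hs : 0 < s.re) (n : ℕ) :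
    Complex.Gamma (s + n) = (ascPochhammer ℂ n).eval s * Complex.Gamma s := by
  induction n with
  | zero => simp
  | succ n ih =>
    have hsn : s + n ≠ 0 := by
      intro h
      have : (s + n).re = 0 := by rw [h]; simp
      simp only [Complex.add_re, Complex.natCast_re] at this
      have : (0:ℝ) ≤ n := n.cast_nonneg
      linarith
    have : s + ((n:ℂ) + 1) = (s + n) + 1 := by ring
    rw [Nat.cast_succ, this, Complex.Gamma_add_one _ hsn, ih, poch_succ]
    ring

private lemma one_sub_slit {z : ℂ} (hz : ‖z‖ < 1) : 1 - z ∈ Complex.slitPlane := by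
  rw [Complex.mem_slitPlane_iff]
  left
  simp only [Complex.sub_re, Complex.one_re]
  have : z.re ≤ ‖z‖ := Complex.re_le_norm z
  linarith

private lemma hasDerivAt_one_sub_cpow (s : ℂ) {z : ℂ} (hz : ‖z‖ < 1) :
    HasDerivAt (fun z : ℂ => (1 - z) ^ s) (-s * (1 - z) ^ (s - 1)) z := by
  have h := ((hasDerivAt_id z).const_sub 1).cpow_const (c := s) (one_sub_slit hz)
  simp only [id] at h
  convert h using 1
  ring

private lemma iteratedDeriv_one_sub_cpow (β : ℂ) (n : ℕ) :
    ∀ z ∈ Metric.ball (0:ℂ) 1,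
      iteratedDeriv n (fun z : ℂ => (1 - z) ^ (-β)) z
        = (ascPochhammer ℂ n).eval β * (1 - z) ^ (-β - n) := by
  induction n with
  | zero => intro z _; simp
  | succ n ih =>
    intro z hz
    rw [iteratedDeriv_succ]
    have hev : iteratedDeriv n (fun z : ℂ => (1 - z) ^ (-β))
        =ᶠ[nhds z] fun z => (ascPochhammer ℂ n).eval β * (1 - z) ^ (-β - n) := by
      filter_upwards [Metric.isOpen_ball.mem_nhds hz] with w hw
      exact ih w hw
    rw [hev.deriv_eq]
    have hz' : ‖z‖ < 1 := by simpa [Metric.mem_ball] using hz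
    have h := ((hasDerivAt_one_sub_cpow (-β - n) hz').const_mul
      ((ascPochhammer ℂ n).eval β)).deriv
    rw [h, poch_succ]
    rw [show -β - n - 1 = -β - (n+1 : ℕ) by push_cast; ring]
    ring

private lemma hasSum_binomial (β : ℂ) {w : ℂ} (hw : ‖w‖ < 1) :
    HasSum (fun n : ℕ => (ascPochhammer ℂ n).eval β / n.factorial * w ^ n)
      ((1 - w) ^ (-β)) := by
  have hf : DifferentiableOn ℂ (fun z : ℂ => (1 - z) ^ (-β)) (Metric.ball 0 1) := by
    intro z hz
    have hz' : ‖z‖ < 1 := by simpa [Metric.mem_ball] using hz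
    exact (hasDerivAt_one_sub_cpow (-β) hz').differentiableAt.differentiableWithinAt
  have hwmem : w ∈ Metric.ball (0:ℂ) 1 := by simpa [Metric.mem_ball] using hw
  have H := Complex.hasSum_taylorSeries_on_ball hf hwmem
  convert H using 2 with n
  · rfl
  rw [iteratedDeriv_one_sub_cpow β n 0 (by simp), sub_zero, smul_eq_mul, smul_eq_mul]
  rw [sub_zero, Complex.one_cpow]
  field_simp

private lemma summable_poch_real (b : ℝ) {x : ℝ} (hx : 0 ≤ x) (hx1 : x < 1) :
    Summable (fun n : ℕ => (ascPochhammer ℝ n).eval b * x ^ n / n.factorial) := by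
  have hw : ‖(x:ℂ)‖ < 1 := by
    rw [Complex.norm_real, Real.norm_of_nonneg hx]; exact hx1
  have := (hasSum_binomial (b:ℂ) hw).summable
  rw [← Complex.summable_ofReal]
  refine this.congr fun n => ?_
  rw [poch_ofReal]
  push_cast
  ring

open MeasureTheory in
theorem integral_appellF1' (η₁ η₂ β₁ β₂ z₁ z₂ : ℂ)
    (hη₁ : 0 < η₁.re) (hη₂ : 0 < η₂.re)
    (hz₁ : ‖z₁‖ < 1) (hz₂ : ‖z₂‖ < 1) :
    (∫ u in (0:ℝ)..1, (u : ℂ) ^ (η₁ - 1) * (1 - (u : ℂ)) ^ (η₂ - 1)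
        * (1 - z₁ * (u : ℂ)) ^ (-β₁) * (1 - z₂ * (u : ℂ)) ^ (-β₂))
    = (Complex.Gamma η₁ * Complex.Gamma η₂ / Complex.Gamma (η₁ + η₂))
      * (∑' r : ℕ, ∑' s : ℕ,
          (ascPochhammer ℂ (r + s)).eval η₁ * (ascPochhammer ℂ r).eval β₁
            * (ascPochhammer ℂ s).eval β₂ * z₁ ^ r * z₂ ^ s
            / ((ascPochhammer ℂ (r + s)).eval (η₁ + η₂) * (r.factorial : ℂ)
                * (s.factorial : ℂ))) := by
  have hz₁' : ‖z₁‖ < 1 := by exact hz₁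
  have hz₂' : ‖z₂‖ < 1 := by exact hz₂
  have hη₁₂ : 0 < (η₁ + η₂).re := by rw [Complex.add_re]; linarith
  have hGne : Complex.Gamma (η₁ + η₂) ≠ 0 := Complex.Gamma_ne_zero_of_re_pos hη₁₂
  have hG1 : Complex.Gamma η₁ ≠ 0 := Complex.Gamma_ne_zero_of_re_pos hη₁
  have hG2 : Complex.Gamma η₂ ≠ 0 := Complex.Gamma_ne_zero_of_re_pos hη₂
  have hrepos : ∀ n : ℕ, 0 < (η₁ + (n:ℂ)).re := by
    intro n
    rw [Complex.add_re, Complex.natCast_re]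
    have : (0:ℝ) ≤ n := n.cast_nonneg
    linarith
  set C : ℕ × ℕ → ℂ := fun p =>
    (ascPochhammer ℂ p.1).eval β₁ / p.1.factorial * z₁ ^ p.1 *
      ((ascPochhammer ℂ p.2).eval β₂ / p.2.factorial * z₂ ^ p.2) with hC
  set F : ℕ × ℕ → ℝ → ℂ := fun p u =>
    (u : ℂ) ^ (η₁ - 1) * (1 - (u : ℂ)) ^ (η₂ - 1) *
      ((ascPochhammer ℂ p.1).eval β₁ / p.1.factorial * (z₁ * u) ^ p.1) *
      ((ascPochhammer ℂ p.2).eval β₂ / p.2.factorial * (z₂ * u) ^ p.2) with hF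
  set T : ℕ × ℕ → ℂ := fun p =>
    (ascPochhammer ℂ (p.1 + p.2)).eval η₁ * (ascPochhammer ℂ p.1).eval β₁
      * (ascPochhammer ℂ p.2).eval β₂ * z₁ ^ p.1 * z₂ ^ p.2
      / ((ascPochhammer ℂ (p.1 + p.2)).eval (η₁ + η₂) * (p.1.factorial : ℂ)
          * (p.2.factorial : ℂ)) with hT
  set pref : ℂ := Complex.Gamma η₁ * Complex.Gamma η₂ / Complex.Gamma (η₁ + η₂) with hpref
  -- summable norm coefficient series
  have hnormterm : ∀ (β w : ℂ), ‖w‖ < 1 →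
      Summable (fun r : ℕ => ‖(ascPochhammer ℂ r).eval β / r.factorial * w ^ r‖) := by
    intro β w hw
    refine Summable.of_nonneg_of_le (fun r => norm_nonneg _) (fun r => ?_)
      (summable_poch_real ‖β‖ (norm_nonneg w) hw)
    rw [norm_mul, norm_div, Complex.norm_natCast, norm_pow, div_mul_eq_mul_div]
    gcongr
    exact poch_norm_le β r
  -- pointwise expansion of the integrand as a double series
  have hpt : ∀ u : ℝ, u ∈ Set.Ioo (0:ℝ) 1 → HasSum (fun p : ℕ × ℕ => F p u)
      ((u : ℂ) ^ (η₁ - 1) * (1 - (u : ℂ)) ^ (η₂ - 1)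
        * (1 - z₁ * (u : ℂ)) ^ (-β₁) * (1 - z₂ * (u : ℂ)) ^ (-β₂)) := by
    intro u hu
    have hu1 : ∀ z : ℂ, ‖z‖ < 1 → ‖z * (u:ℂ)‖ < 1 := by
      intro z hz
      rw [norm_mul, Complex.norm_real, Real.norm_of_nonneg hu.1.le]
      nlinarith [norm_nonneg z, hu.2, hu.1]
    have h1 := hasSum_binomial β₁ (hu1 z₁ hz₁')
    have h2 := hasSum_binomial β₂ (hu1 z₂ hz₂')
    have hs := summable_mul_of_summable_norm (hnormterm β₁ _ (hu1 z₁ hz₁'))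
      (hnormterm β₂ _ (hu1 z₂ hz₂'))
    have h3 := (h1.mul h2 hs).mul_left ((u : ℂ) ^ (η₁ - 1) * (1 - (u : ℂ)) ^ (η₂ - 1))
    convert h3 using 1
    · rfl
    · funext p
      simp only [hF]
      ring
    · ring
  -- integrability of the beta-type integrands
  have hbetaC : ∀ n : ℕ, IntegrableOn
      (fun u : ℝ => (u:ℂ) ^ (η₁ + (n:ℂ) - 1) * (1 - (u:ℂ)) ^ (η₂ - 1))
      (Set.Ioo (0:ℝ) 1) volume := by
    intro n
    have := Complex.betaIntegral_convergent (hrepos n) hη₂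
    rw [intervalIntegrable_iff_integrableOn_Ioc_of_le zero_le_one] at this
    exact this.mono_set Set.Ioo_subset_Ioc_self
  -- rewriting F on the interval
  have hFeq : ∀ p : ℕ × ℕ, Set.EqOn
      (fun u : ℝ => C p * ((u:ℂ) ^ (η₁ + ((p.1 + p.2 : ℕ):ℂ) - 1) * (1 - (u:ℂ)) ^ (η₂ - 1)))
      (F p) (Set.Ioo (0:ℝ) 1) := by
    intro p u hu
    have hu0 : (u:ℂ) ≠ 0 := by
      simpa using ne_of_gt hu.1
    have hpow : (u:ℂ) ^ (η₁ + ((p.1 + p.2 : ℕ):ℂ) - 1)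
        = (u:ℂ) ^ (η₁ - 1) * (u:ℂ) ^ p.1 * (u:ℂ) ^ p.2 := by
      rw [← Complex.cpow_natCast (u:ℂ) p.1, ← Complex.cpow_natCast (u:ℂ) p.2,
        ← Complex.cpow_add _ _ hu0, ← Complex.cpow_add _ _ hu0]
      congr 1
      push_cast
      ring
    simp only [hC, hF]
    rw [hpow, mul_pow, mul_pow]
    ring
  have hint : ∀ p : ℕ × ℕ, IntegrableOn (F p) (Set.Ioo (0:ℝ) 1) volume := by
    intro p
    have h0 : IntegrableOn
        (fun u : ℝ => C p * ((u:ℂ) ^ (η₁ + ((p.1 + p.2 : ℕ):ℂ) - 1) * (1 - (u:ℂ)) ^ (η₂ - 1)))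
        (Set.Ioo (0:ℝ) 1) volume := (hbetaC (p.1 + p.2)).const_mul (C p)
    exact h0.congr_fun (hFeq p) measurableSet_Ioo
  -- value of each integral
  have hIval : ∀ p : ℕ × ℕ, (∫ u in Set.Ioo (0:ℝ) 1, F p u)
      = C p * Complex.betaIntegral (η₁ + ((p.1 + p.2 : ℕ):ℂ)) η₂ := by
    intro p
    rw [← setIntegral_congr_fun measurableSet_Ioo (hFeq p), integral_const_mul,
      ← integral_Ioc_eq_integral_Ioo, ← intervalIntegral.integral_of_le zero_le_one,
      Complex.betaIntegral]
  -- integrability of the real beta integrand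
  have hInth : IntegrableOn (fun u : ℝ => u ^ (η₁.re - 1) * (1 - u) ^ (η₂.re - 1))
      (Set.Ioo (0:ℝ) 1) volume := by
    have h0 : IntegrableOn
        (fun u : ℝ => ‖(u:ℂ) ^ (η₁ + ((0:ℕ):ℂ) - 1) * (1 - (u:ℂ)) ^ (η₂ - 1)‖)
        (Set.Ioo (0:ℝ) 1) volume := (hbetaC 0).norm
    refine h0.congr_fun (fun u hu => ?_) measurableSet_Ioo
    have h1u : (0:ℝ) < 1 - u := by linarith [hu.2]
    beta_reduce
    rw [norm_mul,
      norm_cpow_eq_rpow_re_of_pos hu.1,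
      show (1 - (u:ℂ)) = (((1 - u : ℝ)):ℂ) by push_cast; ring,
      norm_cpow_eq_rpow_re_of_pos h1u]
    simp [Complex.sub_re, Complex.add_re]
  set M : ℝ := ∫ u in Set.Ioo (0:ℝ) 1, u ^ (η₁.re - 1) * (1 - u) ^ (η₂.re - 1) with hM
  set D₁ : ℕ → ℝ := fun r => (ascPochhammer ℝ r).eval ‖β₁‖ * ‖z₁‖ ^ r / r.factorial with hD₁def
  set D₂ : ℕ → ℝ := fun s => (ascPochhammer ℝ s).eval ‖β₂‖ * ‖z₂‖ ^ s / s.factorial with hD₂def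
  have hD₁ : Summable D₁ := summable_poch_real ‖β₁‖ (norm_nonneg z₁) hz₁'
  have hD₂ : Summable D₂ := summable_poch_real ‖β₂‖ (norm_nonneg z₂) hz₂'
  have hD₁0 : ∀ r, 0 ≤ D₁ r := fun r => div_nonneg
    (mul_nonneg (poch_real_nonneg (norm_nonneg β₁) r) (pow_nonneg (norm_nonneg z₁) r))
    (Nat.cast_nonneg _)
  have hD₂0 : ∀ s, 0 ≤ D₂ s := fun s => div_nonneg
    (mul_nonneg (poch_real_nonneg (norm_nonneg β₂) s) (pow_nonneg (norm_nonneg z₂) s))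
    (Nat.cast_nonneg _)
  -- bound on the integral of the norm
  have hnormle : ∀ p : ℕ × ℕ, (∫ u in Set.Ioo (0:ℝ) 1, ‖F p u‖) ≤ D₁ p.1 * D₂ p.2 * M := by
    intro p
    have hptle : ∀ u ∈ Set.Ioo (0:ℝ) 1, ‖F p u‖
        ≤ D₁ p.1 * D₂ p.2 * (u ^ (η₁.re - 1) * (1 - u) ^ (η₂.re - 1)) := by
      intro u hu
      have h1u : (0:ℝ) < 1 - u := by linarith [hu.2]
      have ht : ∀ (β z : ℂ) (r : ℕ), ‖(ascPochhammer ℂ r).eval β / r.factorial * (z * u) ^ r‖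
          ≤ (ascPochhammer ℝ r).eval ‖β‖ * ‖z‖ ^ r / r.factorial := by
        intro β z r
        have hzu : ‖z‖ * u ≤ ‖z‖ := by nlinarith [norm_nonneg z, hu.2, hu.1]
        have h1 : ‖(ascPochhammer ℂ r).eval β‖ * (‖z‖ * u) ^ r
            ≤ (ascPochhammer ℝ r).eval ‖β‖ * ‖z‖ ^ r :=
          mul_le_mul (poch_norm_le β r)
            (pow_le_pow_left₀ (mul_nonneg (norm_nonneg z) hu.1.le) hzu r)
            (pow_nonneg (mul_nonneg (norm_nonneg z) hu.1.le) r)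
            (poch_real_nonneg (norm_nonneg β) r)
        rw [norm_mul, norm_div, Complex.norm_natCast, norm_pow, norm_mul, Complex.norm_real,
          Real.norm_of_nonneg hu.1.le, div_mul_eq_mul_div]
        exact div_le_div_of_nonneg_right h1 (by positivity)
      have hF' : ‖F p u‖ = u ^ (η₁.re - 1) * (1 - u) ^ (η₂.re - 1)
          * ‖(ascPochhammer ℂ p.1).eval β₁ / p.1.factorial * (z₁ * u) ^ p.1‖
          * ‖(ascPochhammer ℂ p.2).eval β₂ / p.2.factorial * (z₂ * u) ^ p.2‖ := by
        simp only [hF]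
        rw [norm_mul, norm_mul, norm_mul,
          norm_cpow_eq_rpow_re_of_pos hu.1,
          show (1 - (u:ℂ)) = (((1 - u : ℝ)):ℂ) by push_cast; ring,
          norm_cpow_eq_rpow_re_of_pos h1u]
        have e1 : (η₁ - 1).re = η₁.re - 1 := by simp [Complex.sub_re]
        have e2 : (η₂ - 1).re = η₂.re - 1 := by simp [Complex.sub_re]
        rw [e1, e2]
      rw [hF']
      have hab : 0 ≤ u ^ (η₁.re - 1) * (1 - u) ^ (η₂.re - 1) :=
        mul_nonneg (Real.rpow_nonneg hu.1.le _) (Real.rpow_nonneg h1u.le _)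
      calc u ^ (η₁.re - 1) * (1 - u) ^ (η₂.re - 1)
            * ‖(ascPochhammer ℂ p.1).eval β₁ / p.1.factorial * (z₁ * u) ^ p.1‖
            * ‖(ascPochhammer ℂ p.2).eval β₂ / p.2.factorial * (z₂ * u) ^ p.2‖
          = (u ^ (η₁.re - 1) * (1 - u) ^ (η₂.re - 1))
            * (‖(ascPochhammer ℂ p.1).eval β₁ / p.1.factorial * (z₁ * u) ^ p.1‖
              * ‖(ascPochhammer ℂ p.2).eval β₂ / p.2.factorial * (z₂ * u) ^ p.2‖) := by ring
        _ ≤ (u ^ (η₁.re - 1) * (1 - u) ^ (η₂.re - 1)) * (D₁ p.1 * D₂ p.2) := by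
            refine mul_le_mul_of_nonneg_left ?_ hab
            exact mul_le_mul (ht β₁ z₁ p.1) (ht β₂ z₂ p.2) (norm_nonneg _) (hD₁0 _)
        _ = D₁ p.1 * D₂ p.2 * (u ^ (η₁.re - 1) * (1 - u) ^ (η₂.re - 1)) := by ring
    calc (∫ u in Set.Ioo (0:ℝ) 1, ‖F p u‖)
        ≤ ∫ u in Set.Ioo (0:ℝ) 1,
            D₁ p.1 * D₂ p.2 * (u ^ (η₁.re - 1) * (1 - u) ^ (η₂.re - 1)) :=
          setIntegral_mono_on ((hint p).norm) (hInth.const_mul _) measurableSet_Ioo hptle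
      _ = D₁ p.1 * D₂ p.2 * M := by rw [integral_const_mul]
  have hsumnorm : Summable (fun p : ℕ × ℕ => ∫ u in Set.Ioo (0:ℝ) 1, ‖F p u‖) :=
    Summable.of_nonneg_of_le
      (fun p => setIntegral_nonneg measurableSet_Ioo fun u _ => norm_nonneg _)
      hnormle ((hD₁.mul_of_nonneg hD₂ hD₁0 hD₂0).mul_right M)
  have hHasSum := MeasureTheory.hasSum_integral_of_summable_integral_norm hint hsumnorm
  -- beta integral values via Gamma
  have hBeta : ∀ n : ℕ, Complex.betaIntegral (η₁ + (n:ℂ)) η₂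
      = ((ascPochhammer ℂ n).eval η₁ * (Complex.Gamma η₁ * Complex.Gamma η₂))
        / ((ascPochhammer ℂ n).eval (η₁ + η₂) * Complex.Gamma (η₁ + η₂)) := by
    intro n
    have h1 := Complex.Gamma_mul_Gamma_eq_betaIntegral (hrepos n) hη₂
    rw [show η₁ + (n:ℂ) + η₂ = (η₁ + η₂) + (n:ℂ) by ring, Gamma_add_nat hη₁₂ n,
      Gamma_add_nat hη₁ n] at h1
    have hne : (ascPochhammer ℂ n).eval (η₁ + η₂) * Complex.Gamma (η₁ + η₂) ≠ 0 :=
      mul_ne_zero (poch_ne_zero hη₁₂ n) hGne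
    rw [eq_div_iff hne]
    linear_combination -h1
  have hterm : ∀ p : ℕ × ℕ, C p * Complex.betaIntegral (η₁ + ((p.1 + p.2 : ℕ):ℂ)) η₂
      = pref * T p := by
    intro p
    rw [hBeta (p.1 + p.2)]
    have f1 : ((p.1.factorial : ℕ) : ℂ) ≠ 0 := Nat.cast_ne_zero.mpr p.1.factorial_ne_zero
    have f2 : ((p.2.factorial : ℕ) : ℂ) ≠ 0 := Nat.cast_ne_zero.mpr p.2.factorial_ne_zero
    have hpne : (ascPochhammer ℂ (p.1 + p.2)).eval (η₁ + η₂) ≠ 0 := poch_ne_zero hη₁₂ _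
    simp only [hC, hT, hpref]
    field_simp
  have hprefne : pref ≠ 0 := div_ne_zero (mul_ne_zero hG1 hG2) hGne
  have hTsum : Summable T := by
    refine (hHasSum.summable.mul_left pref⁻¹).congr fun p => ?_
    rw [hIval p, hterm p, inv_mul_cancel_left₀ hprefne]
  rw [intervalIntegral.integral_of_le zero_le_one, integral_Ioc_eq_integral_Ioo,
    setIntegral_congr_fun measurableSet_Ioo (fun u hu => ((hpt u hu).tsum_eq).symm),
    ← hHasSum.tsum_eq]
  calc (∑' p : ℕ × ℕ, ∫ u in Set.Ioo (0:ℝ) 1, F p u)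
      = ∑' p : ℕ × ℕ, pref * T p := by
        refine tsum_congr fun p => ?_
        rw [hIval p, hterm p]
    _ = pref * ∑' p : ℕ × ℕ, T p := tsum_mul_left
    _ = pref * ∑' (r : ℕ) (s : ℕ), T (r, s) := by
        rw [Summable.tsum_prod' hTsum fun r => hTsum.prod_factor r]
    _ = _ := rfl

/-- Euler-type integral representation of the first Appell function `F₁`. -/
theorem integral_appellF1 (η₁ η₂ β₁ β₂ z₁ z₂ : ℂ)
    (hη₁ : 0 < η₁.re) (hη₂ : 0 < η₂.re)
    (hz₁ : ‖z₁‖ < 1) (hz₂ : ‖z₂‖ < 1) :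
    (∫ u in (0:ℝ)..1, (u : ℂ) ^ (η₁ - 1) * (1 - (u : ℂ)) ^ (η₂ - 1)
        * (1 - z₁ * (u : ℂ)) ^ (-β₁) * (1 - z₂ * (u : ℂ)) ^ (-β₂))
    = (Complex.Gamma η₁ * Complex.Gamma η₂ / Complex.Gamma (η₁ + η₂))
      * appellF1 η₁ β₁ β₂ (η₁ + η₂) z₁ z₂ := by
  rw [appellF1]
  exact integral_appellF1' η₁ η₂ β₁ β₂ z₁ z₂ hη₁ hη₂ hz₁ hz₂
end

section
/- Let η₁, η₂ ∈ ℂ with Re(η₁) > 0 and Re(η₂) > 0, let β₁, β₂ ∈ ℂ, and let z₁, z₂ ∈ ℂ with |z₁| < 1 and |z₂| < 1. Then ∫₀¹ u^{η₁−1} (1−u)^{η₂−1} (1−z₁u)^{−β₁} (1−z₂(1−u))^{−β₂} du = B(η₁, η₂) · F₃(η₁, η₂, β₁, β₂; η₁+η₂; z₁, z₂), where F₃(a, a′, b, b′; c; x, y) = Σ_{r=0}^∞ Σ_{s=0}^∞ (a)_r (a′)_s (b)_r (b′)_s x^r y^s / ((c)_{r+s} r! s!) is the third Appell hypergeometric function.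 -/
open Complex Polynomial

/-- The third Appell hypergeometric function `F₃(a, a', b, b'; c; x, y)`. -/
noncomputable def appellF3 (a a' b b' c x y : ℂ) : ℂ :=
  ∑' r : ℕ, ∑' s : ℕ,
    (ascPochhammer ℂ r).eval a * (ascPochhammer ℂ s).eval a'
      * (ascPochhammer ℂ r).eval b * (ascPochhammer ℂ s).eval b' * x ^ r * y ^ s
      / ((ascPochhammer ℂ (r + s)).eval c * (r.factorial : ℂ) * (s.factorial : ℂ))

section Aux
open Filter

noncomputable def bcoef (β : ℂ) (r : ℕ) : ℂ := (ascPochhammer ℂ r).eval β / r.factorial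

lemma bcoef_zero (β : ℂ) : bcoef β 0 = 1 := by simp [bcoef]

lemma poch_pos {a : ℝ} (ha : 0 < a) (r : ℕ) : 0 < (ascPochhammer ℝ r).eval a := by
  induction r with
  | zero => simp
  | succ n ih =>
    rw [ascPochhammer_succ_eval]
    positivity

lemma norm_poch_le (β : ℂ) (r : ℕ) :
    ‖(ascPochhammer ℂ r).eval β‖ ≤ (ascPochhammer ℝ r).eval (‖β‖ + 1) := by
  induction r with
  | zero => simp
  | succ n ih =>
    rw [ascPochhammer_succ_eval, ascPochhammer_succ_eval]
    calc ‖(ascPochhammer ℂ n).eval β * (β + n)‖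
        = ‖(ascPochhammer ℂ n).eval β‖ * ‖β + (n : ℂ)‖ := norm_mul _ _
      _ ≤ (ascPochhammer ℝ n).eval (‖β‖ + 1) * (‖β‖ + 1 + n) := by
          apply mul_le_mul ih ?_ (norm_nonneg _) (le_of_lt (poch_pos (by positivity) n))
          calc ‖β + (n:ℂ)‖ ≤ ‖β‖ + ‖(n:ℂ)‖ := norm_add_le _ _
            _ ≤ ‖β‖ + 1 + n := by rw [Complex.norm_natCast]; linarith

lemma poch_ne_zero_s5 {c : ℂ} (hc : 0 < c.re) (n : ℕ) : (ascPochhammer ℂ n).eval c ≠ 0 := by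
  induction n with
  | zero => simp
  | succ m ih =>
    rw [ascPochhammer_succ_eval]
    refine mul_ne_zero ih ?_
    intro h
    have : (c + m).re = 0 := by rw [h]; simp
    simp only [Complex.add_re, Complex.natCast_re] at this
    have : (0:ℝ) ≤ (m:ℝ) := Nat.cast_nonneg m
    linarith

lemma ratio_aux (c : ℝ) : Tendsto (fun n : ℕ => (c + n) / (n + 1)) atTop (nhds 1) := by
  have h1 : Tendsto (fun n : ℕ => (c - 1) * (1 / (n + 1)) + 1) atTop (nhds ((c-1) * 0 + 1)) :=
    (tendsto_one_div_add_atTop_nhds_zero_nat.const_mul (c-1)).add tendsto_const_nhds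
  simp only [mul_zero, zero_add] at h1
  refine h1.congr fun n => ?_
  have hn : (n : ℝ) + 1 ≠ 0 := by positivity
  field_simp
  ring

lemma summable_poch (c : ℝ) {x : ℝ} (hc : 0 < c) (hx0 : 0 ≤ x) (hx : x < 1) :
    Summable (fun r : ℕ => (ascPochhammer ℝ r).eval c / r.factorial * x ^ r) := by
  set g : ℕ → ℝ := fun r => (ascPochhammer ℝ r).eval c / r.factorial * x ^ r with hg
  rcases eq_or_lt_of_le hx0 with h0 | hpos
  · apply summable_of_ne_finset_zero (s := {0})
    intro r hr
    have : r ≠ 0 := by simpa using hr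
    simp [hg, ← h0, zero_pow this]
  have hgpos : ∀ n, 0 < g n := by
    intro n
    have := poch_pos hc n
    have := Nat.factorial_pos n
    have : (0:ℝ) < n.factorial := by exact_mod_cast this
    positivity
  refine summable_of_ratio_test_tendsto_lt_one hx
    (Eventually.of_forall fun n => (hgpos n).ne') ?_
  have key : ∀ n : ℕ, ‖g (n+1)‖ / ‖g n‖ = (c + n) / (n + 1) * x := by
    intro n
    rw [Real.norm_of_nonneg (hgpos _).le, Real.norm_of_nonneg (hgpos _).le]
    have h2 : g (n+1) = g n * ((c + n) / (n + 1) * x) := by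
      have hfac : ((n+1).factorial : ℝ) = (n+1) * n.factorial := by
        rw [Nat.factorial_succ]; push_cast; ring
      have hnfac : (n.factorial : ℝ) ≠ 0 := by positivity
      have hn1 : (n : ℝ) + 1 ≠ 0 := by positivity
      simp only [hg, ascPochhammer_succ_eval, hfac, pow_succ]
      field_simp
    rw [h2, mul_div_cancel_left₀ _ (hgpos n).ne']
  simp only [key]
  have := (ratio_aux c).mul_const x
  simpa using this

lemma summable_norm_bcoef (β : ℂ) {x : ℝ} (hx0 : 0 ≤ x) (hx : x < 1) :
    Summable (fun r : ℕ => ‖bcoef β r‖ * x ^ r) := by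
  refine Summable.of_nonneg_of_le (fun r => by positivity) (fun r => ?_)
    (summable_poch (‖β‖ + 1) (by positivity) hx0 hx)
  have h1 : ‖bcoef β r‖ ≤ (ascPochhammer ℝ r).eval (‖β‖ + 1) / r.factorial := by
    rw [bcoef, norm_div, Complex.norm_natCast]
    exact div_le_div_of_nonneg_right (norm_poch_le β r) (by positivity) |>.trans_eq rfl
  exact mul_le_mul_of_nonneg_right h1 (pow_nonneg hx0 r)

lemma bcoef_succ_mul (β : ℂ) (r : ℕ) :
    bcoef β (r+1) * (r+1) = β * bcoef (β+1) r := by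
  have h : (ascPochhammer ℂ (r+1)).eval β = β * (ascPochhammer ℂ r).eval (β+1) := by
    rw [ascPochhammer_succ_left]
    simp [Polynomial.eval_comp]
  have hfac : ((r+1).factorial : ℂ) = (r+1) * r.factorial := by
    rw [Nat.factorial_succ]; push_cast; ring
  have h1 : ((r:ℂ) + 1) ≠ 0 := Nat.cast_add_one_ne_zero r
  have h2 : (r.factorial : ℂ) ≠ 0 := by exact_mod_cast Nat.factorial_ne_zero r
  rw [bcoef, bcoef, h, hfac]
  push_cast
  field_simp

lemma bcoef_diff (β : ℂ) (r : ℕ) :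
    bcoef (β+1) (r+1) - bcoef (β+1) r = bcoef β (r+1) := by
  have h : (ascPochhammer ℂ (r+1)).eval β = β * (ascPochhammer ℂ r).eval (β+1) := by
    rw [ascPochhammer_succ_left]
    simp [Polynomial.eval_comp]
  have hs : (ascPochhammer ℂ (r+1)).eval (β+1) = (ascPochhammer ℂ r).eval (β+1) * (β+1+r) := by
    rw [ascPochhammer_succ_eval]
  have hfac : ((r+1).factorial : ℂ) = (r+1) * r.factorial := by
    rw [Nat.factorial_succ]; push_cast; ring
  have h1 : ((r:ℂ) + 1) ≠ 0 := Nat.cast_add_one_ne_zero r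
  have h2 : (r.factorial : ℂ) ≠ 0 := by exact_mod_cast Nat.factorial_ne_zero r
  rw [bcoef, bcoef, bcoef, h, hs, hfac]
  field_simp
  ring

lemma shift_hasSum {c : ℕ → ℂ} {a : ℂ} (h : HasSum c a) :
    HasSum (fun r : ℕ => if r = 0 then 0 else c (r-1)) a := by
  have hinj : Function.Injective (fun r : ℕ => r + 1) := add_left_injective 1
  refine (Function.Injective.hasSum_iff hinj ?_).mp ?_
  · intro x hx
    have hx0 : x = 0 := by
      by_contra h0
      exact hx ⟨x - 1, by show x - 1 + 1 = x; omega⟩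
    simp [hx0]
  · have e : ((fun r : ℕ => if r = 0 then 0 else c (r-1)) ∘ (fun r => r + 1)) = c :=
      funext fun r => by simp
    rw [e]; exact h

lemma binomial_hasSum (β : ℂ) {w : ℂ} (hw : ‖w‖ < 1) :
    HasSum (fun r : ℕ => bcoef β r * w ^ r) ((1 - w) ^ (-β)) := by
  have hsum : ∀ (γ : ℂ) {v : ℂ}, ‖v‖ < 1 → Summable (fun r : ℕ => bcoef γ r * v ^ r) := by
    intro γ v hv
    apply Summable.of_norm
    have := summable_norm_bcoef γ (norm_nonneg v) hv
    simpa [norm_mul, norm_pow] using this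
  set g : ℂ → ℂ := fun v => ∑' r : ℕ, bcoef β r * v ^ r with hgdef
  set G : ℂ → ℂ := fun v => ∑' r : ℕ, bcoef (β+1) r * v ^ r with hGdef
  -- key algebraic identity
  have key : ∀ v : ℂ, ‖v‖ < 1 → (1 - v) * G v = g v := by
    intro v hv
    have hG : HasSum (fun r : ℕ => bcoef (β+1) r * v ^ r) (G v) := (hsum _ hv).hasSum
    have h3 : HasSum (fun r : ℕ => bcoef (β+1) r * v ^ (r+1)) (v * G v) := by
      have := hG.mul_left v
      refine this.congr_fun fun r => by ring
    have h2 : HasSum (fun r : ℕ => if r = 0 then 0 else bcoef (β+1) (r-1) * v ^ r)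
        (v * G v) := by
      have := shift_hasSum h3
      refine this.congr_fun fun r => ?_
      rcases r with _ | k
      · simp
      · simp
    have h4 := hG.sub h2
    have e2 : ∀ r : ℕ, bcoef (β+1) r * v ^ r -
        (if r = 0 then 0 else bcoef (β+1) (r-1) * v ^ r) = bcoef β r * v ^ r := by
      intro r
      rcases r with _ | k
      · simp [bcoef_zero]
      · simp only [Nat.succ_ne_zero, if_false, Nat.add_sub_cancel]
        rw [← sub_mul, bcoef_diff]
    have h5 : HasSum (fun r : ℕ => bcoef β r * v ^ r) ((1 - v) * G v) := by
      have := h4.congr_fun fun r => (e2 r).symm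
      have heq : G v - v * G v = (1 - v) * G v := by ring
      rwa [heq] at this
    exact (h5.tsum_eq).symm
  -- setup for the ODE-style argument on a ball
  set ρ : ℝ := (1 + ‖w‖) / 2 with hρdef
  have hρ0 : 0 < ρ := by positivity
  have hρ1 : ρ < 1 := by simp only [hρdef]; linarith
  have hwρ : ‖w‖ < ρ := by simp only [hρdef]; linarith
  set t : Set ℂ := Metric.ball (0:ℂ) ρ with htdef
  have hmem : ∀ {v : ℂ}, v ∈ t → ‖v‖ < ρ := by
    intro v hv
    simpa [htdef, Metric.mem_ball, dist_eq_norm] using hv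
  have h0t : (0:ℂ) ∈ t := by simp [htdef, Metric.mem_ball, hρ0]
  -- derivative terms
  set f' : ℕ → ℂ → ℂ := fun r v => if r = 0 then 0 else β * bcoef (β+1) (r-1) * v ^ (r-1)
    with hf'def
  set u : ℕ → ℝ := fun r => if r = 0 then 0 else ‖β‖ * (‖bcoef (β+1) (r-1)‖ * ρ ^ (r-1))
    with hudef
  have hu : Summable u := by
    rw [← summable_nat_add_iff 1]
    have : Summable (fun r : ℕ => ‖β‖ * (‖bcoef (β+1) r‖ * ρ ^ r)) :=
      ((summable_norm_bcoef (β+1) hρ0.le hρ1).mul_left ‖β‖)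
    refine this.congr fun r => by simp [hudef]
  have hderiv : ∀ (r : ℕ) (v : ℂ), v ∈ t →
      HasDerivAt (fun z : ℂ => bcoef β r * z ^ r) (f' r v) v := by
    intro r v _
    rcases r with _ | k
    · simp only [pow_zero, mul_one, hf'def, if_true]
      exact hasDerivAt_const v (bcoef β 0)
    · have h := (hasDerivAt_pow (k+1) v).const_mul (bcoef β (k+1))
      have e : bcoef β (k+1) * (((k:ℂ)+1) * v ^ k) = f' (k+1) v := by
        simp only [hf'def, Nat.succ_ne_zero, if_false, Nat.add_sub_cancel]
        rw [← mul_assoc, bcoef_succ_mul]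
      rw [← e]
      refine h.congr_deriv ?_
      simp
  have hbound : ∀ (r : ℕ) (v : ℂ), v ∈ t → ‖f' r v‖ ≤ u r := by
    intro r v hv
    rcases r with _ | k
    · simp [hf'def, hudef]
    · simp only [hf'def, hudef, Nat.succ_ne_zero, if_false, Nat.add_sub_cancel]
      rw [norm_mul, norm_mul, norm_pow, mul_assoc]
      exact mul_le_mul_of_nonneg_left (mul_le_mul_of_nonneg_left
        (pow_le_pow_left₀ (norm_nonneg v) (hmem hv).le k) (norm_nonneg _)) (norm_nonneg _)
  have h0sum : Summable (fun r : ℕ => bcoef β r * (0:ℂ) ^ r) := hsum β (by simp)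
  -- sum of derivative terms
  have hDs : ∀ v : ℂ, ‖v‖ < 1 → HasSum (fun r => f' r v) (β * G v) := by
    intro v hv
    have h := ((hsum (β+1) hv).hasSum.mul_left β)
    have h2 := shift_hasSum h
    refine h2.congr_fun fun r => ?_
    rcases r with _ | k
    · simp [hf'def]
    · simp only [hf'def, Nat.succ_ne_zero, if_false, Nat.add_sub_cancel]
      ring
  have hgderiv : ∀ v ∈ t, HasDerivAt g (β * G v) v := by
    intro v hv
    have := hasDerivAt_tsum_of_isPreconnected hu Metric.isOpen_ball
      (convex_ball (0:ℂ) ρ).isPreconnected hderiv hbound h0t h0sum hv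
    rw [(hDs v ((hmem hv).trans hρ1)).tsum_eq] at this
    exact this
  -- the function (1-v)^β * g v is constant on the ball
  have hone_sub : ∀ {v : ℂ}, ‖v‖ < 1 → 0 < (1 - v).re := by
    intro v hv
    have : v.re ≤ ‖v‖ := Complex.re_le_norm v
    simp only [Complex.sub_re, Complex.one_re]
    linarith
  have hF : ∀ v ∈ t, HasDerivAt (fun z : ℂ => (1 - z) ^ β * g z) 0 v := by
    intro v hv
    have hv1 : ‖v‖ < 1 := (hmem hv).trans hρ1
    have hd1 : HasDerivAt (fun z : ℂ => (1 - z) ^ β) (β * (1 - v) ^ (β - 1) * (-1)) v := by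
      have hid : HasDerivAt (fun z : ℂ => 1 - z) (-1) v := by
        simpa using (hasDerivAt_id v).const_sub 1
      exact hid.cpow_const (c := β) (Complex.mem_slitPlane_iff.mpr (Or.inl (hone_sub hv1)))
    have hd2 : HasDerivAt g (β * G v) v := hgderiv v hv
    have hd := hd1.mul hd2
    have hne : (1 - v) ≠ 0 := by
      intro h
      have := hone_sub hv1
      rw [h] at this
      simp at this
    have hcpow : (1 - v) ^ β = (1 - v) ^ (β - 1) * (1 - v) := by
      have h := Complex.cpow_add (x := 1 - v) (β - 1) 1 hne
      rw [sub_add_cancel, Complex.cpow_one] at h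
      exact h
    have hzero : HasDerivAt (fun z : ℂ => (1 - z) ^ β * g z) 0 v := by
      refine HasDerivAt.congr_deriv hd ?_
      rw [hcpow, ← key v hv1]
      ring
    exact hzero
  have hwt : w ∈ t := by
    simp only [htdef, Metric.mem_ball, dist_eq_norm, sub_zero]
    exact hwρ
  have hconst : (1 - w) ^ β * g w = 1 := by
    have hdiff : DifferentiableOn ℂ (fun z : ℂ => (1 - z) ^ β * g z) t :=
      fun v hv => (hF v hv).differentiableAt.differentiableWithinAt
    have hfd : ∀ v ∈ t, fderivWithin ℂ (fun z : ℂ => (1 - z) ^ β * g z) t v = 0 := by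
      intro v hv
      rw [fderivWithin_of_isOpen Metric.isOpen_ball hv]
      have h0 : HasFDerivAt (fun z : ℂ => (1 - z) ^ β * g z) (0 : ℂ →L[ℂ] ℂ) v := by
        have h1 := (hF v hv).hasFDerivAt
        have h2 : ContinuousLinearMap.toSpanSingleton ℂ (0:ℂ) = 0 := by
          ext; simp
        rwa [h2] at h1
      exact h0.fderiv
    have hc := (convex_ball (0:ℂ) ρ).is_const_of_fderivWithin_eq_zero hdiff hfd hwt h0t
    have hg0 : g 0 = 1 := by
      show (∑' r : ℕ, bcoef β r * (0:ℂ) ^ r) = 1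
      rw [tsum_eq_single 0 ?_]
      · simp [bcoef_zero]
      · intro r hr
        simp [zero_pow hr]
    rw [hc]
    simp [hg0]
  have hgw : g w = (1 - w) ^ (-β) := by
    have h' : g w * (1 - w) ^ β = 1 := by rw [mul_comm]; exact hconst
    rw [Complex.cpow_neg]
    exact eq_inv_of_mul_eq_one_left h'
  have hfinal : HasSum (fun r : ℕ => bcoef β r * w ^ r) (g w) := (hsum β hw).hasSum
  rwa [hgw] at hfinal

lemma Gamma_ne_zero_re_pos {s : ℂ} (h : 0 < s.re) : Complex.Gamma s ≠ 0 := by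
  apply Complex.Gamma_ne_zero
  intro m hm
  rw [hm] at h
  simp only [Complex.neg_re, Complex.natCast_re] at h
  have : (0:ℝ) ≤ (m:ℝ) := Nat.cast_nonneg m
  linarith

lemma Gamma_add_nat_s5 {η : ℂ} (hη : 0 < η.re) (r : ℕ) :
    Complex.Gamma (η + r) = Complex.Gamma η * (ascPochhammer ℂ r).eval η := by
  induction r with
  | zero => simp
  | succ n ih =>
    have hne : η + (n:ℂ) ≠ 0 := by
      intro h
      have h2 : (η + (n:ℂ)).re = 0 := by rw [h]; simp
      simp only [Complex.add_re, Complex.natCast_re] at h2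
      have : (0:ℝ) ≤ (n:ℝ) := Nat.cast_nonneg n
      linarith
    have hcast : (η + ((n+1 : ℕ) : ℂ)) = (η + n) + 1 := by push_cast; ring
    rw [hcast, Complex.Gamma_add_one _ hne, ih, ascPochhammer_succ_eval]
    ring

set_option maxHeartbeats 1000000 in
open MeasureTheory in
theorem integral_appellF3' (η₁ η₂ β₁ β₂ z₁ z₂ : ℂ)
    (hη₁ : 0 < η₁.re) (hη₂ : 0 < η₂.re)
    (hz₁ : ‖z₁‖ < 1) (hz₂ : ‖z₂‖ < 1) :
    (∫ u in (0:ℝ)..1, (u : ℂ) ^ (η₁ - 1) * (1 - (u : ℂ)) ^ (η₂ - 1)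
        * (1 - z₁ * (u : ℂ)) ^ (-β₁) * (1 - z₂ * (1 - (u : ℂ))) ^ (-β₂))
    = (Complex.Gamma η₁ * Complex.Gamma η₂ / Complex.Gamma (η₁ + η₂))
      * (∑' r : ℕ, ∑' s : ℕ,
        (ascPochhammer ℂ r).eval η₁ * (ascPochhammer ℂ s).eval η₂
          * (ascPochhammer ℂ r).eval β₁ * (ascPochhammer ℂ s).eval β₂ * z₁ ^ r * z₂ ^ s
          / ((ascPochhammer ℂ (r + s)).eval (η₁ + η₂) * (r.factorial : ℂ)
            * (s.factorial : ℂ))) := by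
  rw [intervalIntegral.integral_of_le zero_le_one, MeasureTheory.integral_Ioc_eq_integral_Ioo]
  have hz₁' : ‖z₁‖ < 1 := hz₁
  have hz₂' : ‖z₂‖ < 1 := hz₂
  set S : Set ℝ := Set.Ioo (0:ℝ) 1 with hSdef
  set base : ℝ → ℂ := fun u => (u:ℂ) ^ (η₁ - 1) * (1 - (u:ℂ)) ^ (η₂ - 1) with hbase
  set f : ℕ × ℕ → ℝ → ℂ := fun p u =>
    base u * (bcoef β₁ p.1 * (z₁ * (u:ℂ)) ^ p.1)
      * (bcoef β₂ p.2 * (z₂ * (1 - (u:ℂ))) ^ p.2) with hf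
  set C : ℕ × ℕ → ℂ := fun p => bcoef β₁ p.1 * bcoef β₂ p.2 * z₁ ^ p.1 * z₂ ^ p.2 with hC
  have hbeta_int : ∀ (a b : ℂ), 0 < a.re → 0 < b.re →
      IntegrableOn (fun u : ℝ => (u:ℂ) ^ (a-1) * (1 - (u:ℂ)) ^ (b-1)) S := by
    intro a b ha hb
    have h := Complex.betaIntegral_convergent ha hb
    rw [intervalIntegrable_iff_integrableOn_Ioc_of_le zero_le_one] at h
    exact h.mono_set Set.Ioo_subset_Ioc_self
  have hre1 : ∀ r : ℕ, 0 < (η₁ + (r:ℂ)).re := by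
    intro r
    simp only [Complex.add_re, Complex.natCast_re]
    have : (0:ℝ) ≤ r := Nat.cast_nonneg r
    linarith
  have hre2 : ∀ s : ℕ, 0 < (η₂ + (s:ℂ)).re := by
    intro s
    simp only [Complex.add_re, Complex.natCast_re]
    have : (0:ℝ) ≤ s := Nat.cast_nonneg s
    linarith
  have key_eq : ∀ p : ℕ × ℕ, ∀ u ∈ S, f p u
      = C p * ((u:ℂ) ^ (η₁ + p.1 - 1) * (1 - (u:ℂ)) ^ (η₂ + p.2 - 1)) := by
    rintro ⟨r, s⟩ u hu
    obtain ⟨hu0, hu1⟩ := hu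
    have hune : (u:ℂ) ≠ 0 := by exact_mod_cast ne_of_gt hu0
    have h1ne : (1:ℂ) - u ≠ 0 := by
      have hcast : ((1 - u : ℝ) : ℂ) = 1 - (u:ℂ) := by push_cast; ring
      rw [← hcast]
      exact_mod_cast ne_of_gt (by linarith : (0:ℝ) < 1 - u)
    have e1 : (u:ℂ) ^ (η₁ - 1) * (u:ℂ) ^ (r:ℕ) = (u:ℂ) ^ (η₁ + r - 1) := by
      rw [← Complex.cpow_natCast (u:ℂ) r, ← Complex.cpow_add _ _ hune]
      congr 1; ring
    have e2 : (1 - (u:ℂ)) ^ (η₂ - 1) * (1 - (u:ℂ)) ^ (s:ℕ) = (1 - (u:ℂ)) ^ (η₂ + s - 1) := by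
      rw [← Complex.cpow_natCast _ s, ← Complex.cpow_add _ _ h1ne]
      congr 1; ring
    calc f (r,s) u
        = C (r,s) * (((u:ℂ) ^ (η₁-1) * (u:ℂ) ^ (r:ℕ))
            * ((1 - (u:ℂ)) ^ (η₂-1) * (1 - (u:ℂ)) ^ (s:ℕ))) := by
          simp only [hf, hC, hbase, mul_pow]
          ring
      _ = C (r,s) * ((u:ℂ) ^ (η₁ + r - 1) * (1 - (u:ℂ)) ^ (η₂ + s - 1)) := by rw [e1, e2]
  have hInt : ∀ p : ℕ × ℕ, IntegrableOn (f p) S := by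
    intro p
    have h := (hbeta_int _ _ (hre1 p.1) (hre2 p.2)).const_mul (C p)
    exact MeasureTheory.IntegrableOn.congr_fun h (fun u hu => (key_eq p u hu).symm) measurableSet_Ioo
  have hIntVal : ∀ p : ℕ × ℕ,
      (∫ u in S, f p u) = C p * Complex.betaIntegral (η₁ + p.1) (η₂ + p.2) := by
    intro p
    rw [MeasureTheory.setIntegral_congr_fun measurableSet_Ioo (key_eq p),
      MeasureTheory.integral_const_mul]
    congr 1
    rw [Complex.betaIntegral, intervalIntegral.integral_of_le zero_le_one,
      MeasureTheory.integral_Ioc_eq_integral_Ioo]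
  set D : ℕ × ℕ → ℝ := fun p => (‖bcoef β₁ p.1‖ * ‖z₁‖ ^ p.1)
    * (‖bcoef β₂ p.2‖ * ‖z₂‖ ^ p.2) with hD
  have hbase_int : IntegrableOn base S := hbeta_int η₁ η₂ hη₁ hη₂
  have hnorm_u : ∀ u ∈ S, ‖(u:ℂ)‖ ≤ 1 := by
    intro u hu
    rw [Complex.norm_real, Real.norm_eq_abs, _root_.abs_of_nonneg hu.1.le]
    exact hu.2.le
  have hnorm_1u : ∀ u ∈ S, ‖1 - (u:ℂ)‖ ≤ 1 := by
    intro u hu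
    have hcast : (1 - (u:ℂ)) = ((1 - u : ℝ) : ℂ) := by push_cast; ring
    rw [hcast, Complex.norm_real, Real.norm_eq_abs,
      _root_.abs_of_nonneg (by linarith [hu.2] : (0:ℝ) ≤ 1 - u)]
    linarith [hu.1]
  have hnorm_le : ∀ (p : ℕ × ℕ), ∀ u ∈ S, ‖f p u‖ ≤ ‖base u‖ * D p := by
    rintro ⟨r, s⟩ u hu
    simp only [hf, hD]
    rw [norm_mul, norm_mul]
    have hX : ‖bcoef β₁ r * (z₁ * (u:ℂ)) ^ r‖ ≤ ‖bcoef β₁ r‖ * ‖z₁‖ ^ r := by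
      rw [norm_mul, norm_pow, norm_mul]
      have h1 : ‖z₁‖ * ‖(u:ℂ)‖ ≤ ‖z₁‖ :=
        mul_le_of_le_one_right (norm_nonneg _) (hnorm_u u hu)
      exact mul_le_mul_of_nonneg_left (pow_le_pow_left₀ (by positivity) h1 r) (norm_nonneg _)
    have hY : ‖bcoef β₂ s * (z₂ * (1 - (u:ℂ))) ^ s‖ ≤ ‖bcoef β₂ s‖ * ‖z₂‖ ^ s := by
      rw [norm_mul, norm_pow, norm_mul]
      have h1 : ‖z₂‖ * ‖1 - (u:ℂ)‖ ≤ ‖z₂‖ :=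
        mul_le_of_le_one_right (norm_nonneg _) (hnorm_1u u hu)
      exact mul_le_mul_of_nonneg_left (pow_le_pow_left₀ (by positivity) h1 s) (norm_nonneg _)
    rw [mul_assoc]
    exact mul_le_mul_of_nonneg_left
      (mul_le_mul hX hY (norm_nonneg _) (by positivity)) (norm_nonneg _)
  have hD_sum : Summable D :=
    Summable.mul_of_nonneg (summable_norm_bcoef β₁ (norm_nonneg z₁) hz₁')
      (summable_norm_bcoef β₂ (norm_nonneg z₂) hz₂')
      (fun r => by positivity) (fun s => by positivity)
  set Breal : ℝ := ∫ u in S, ‖base u‖ with hBreal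
  have hint_norm_le : ∀ p : ℕ × ℕ, (∫ u in S, ‖f p u‖) ≤ D p * Breal := by
    intro p
    calc (∫ u in S, ‖f p u‖) ≤ ∫ u in S, ‖base u‖ * D p :=
          MeasureTheory.setIntegral_mono_on (hInt p).norm
            (hbase_int.norm.mul_const (D p)) measurableSet_Ioo (hnorm_le p)
      _ = Breal * D p := MeasureTheory.integral_mul_const (D p) _
      _ = D p * Breal := mul_comm _ _
  have hSum_int : Summable (fun p : ℕ × ℕ => ∫ u in S, ‖f p u‖) :=
    Summable.of_nonneg_of_le
      (fun p => MeasureTheory.integral_nonneg (fun u => norm_nonneg _))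
      hint_norm_le (hD_sum.mul_right Breal)
  have hpoint : ∀ u ∈ S, HasSum (fun p : ℕ × ℕ => f p u)
      (base u * ((1 - z₁ * (u:ℂ)) ^ (-β₁) * (1 - z₂ * (1 - (u:ℂ))) ^ (-β₂))) := by
    intro u hu
    have hw1 : ‖z₁ * (u:ℂ)‖ < 1 := by
      rw [norm_mul]
      exact lt_of_le_of_lt (mul_le_of_le_one_right (norm_nonneg _) (hnorm_u u hu)) hz₁'
    have hw2 : ‖z₂ * (1 - (u:ℂ))‖ < 1 := by
      rw [norm_mul]
      exact lt_of_le_of_lt (mul_le_of_le_one_right (norm_nonneg _) (hnorm_1u u hu)) hz₂'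
    have h1 := binomial_hasSum β₁ hw1
    have h2 := binomial_hasSum β₂ hw2
    have hs1 : Summable (fun r : ℕ => ‖bcoef β₁ r * (z₁ * (u:ℂ)) ^ r‖) := by
      have := summable_norm_bcoef β₁ (norm_nonneg (z₁ * (u:ℂ))) hw1
      refine this.congr fun r => ?_
      simp [norm_mul, norm_pow]
    have hs2 : Summable (fun s : ℕ => ‖bcoef β₂ s * (z₂ * (1 - (u:ℂ))) ^ s‖) := by
      have := summable_norm_bcoef β₂ (norm_nonneg (z₂ * (1 - (u:ℂ)))) hw2
      refine this.congr fun s => ?_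
      simp [norm_mul, norm_pow]
    have hmulsum : Summable (fun p : ℕ × ℕ =>
        (bcoef β₁ p.1 * (z₁ * (u:ℂ)) ^ p.1) * (bcoef β₂ p.2 * (z₂ * (1 - (u:ℂ))) ^ p.2)) := by
      apply Summable.of_norm
      have h := hs1.mul_of_nonneg hs2 (fun _ => norm_nonneg _) (fun _ => norm_nonneg _)
      refine h.congr fun p => ?_
      simp [norm_mul]
    have hh := (h1.mul h2 hmulsum).mul_left (base u)
    refine hh.congr_fun fun p => ?_
    simp only [hf]
    ring
  have hswap := MeasureTheory.integral_tsum_of_summable_integral_norm hInt hSum_int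
  have hlhs : (∫ u in S, ((u:ℂ) ^ (η₁ - 1) * (1 - (u:ℂ)) ^ (η₂ - 1)
      * (1 - z₁ * (u:ℂ)) ^ (-β₁) * (1 - z₂ * (1 - (u:ℂ))) ^ (-β₂)))
      = ∑' p : ℕ × ℕ, ∫ u in S, f p u := by
    rw [hswap]
    refine MeasureTheory.setIntegral_congr_fun measurableSet_Ioo fun u hu => ?_
    beta_reduce
    rw [(hpoint u hu).tsum_eq]
    simp only [hbase]
    ring
  rw [hlhs]
  have hGc_ne : Complex.Gamma (η₁ + η₂) ≠ 0 :=
    Gamma_ne_zero_re_pos (by rw [Complex.add_re]; linarith)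
  have hterm : ∀ p : ℕ × ℕ, (∫ u in S, f p u)
      = (Complex.Gamma η₁ * Complex.Gamma η₂ / Complex.Gamma (η₁ + η₂))
        * ((ascPochhammer ℂ p.1).eval η₁ * (ascPochhammer ℂ p.2).eval η₂
          * (ascPochhammer ℂ p.1).eval β₁ * (ascPochhammer ℂ p.2).eval β₂
          * z₁ ^ p.1 * z₂ ^ p.2
          / ((ascPochhammer ℂ (p.1 + p.2)).eval (η₁ + η₂) * (p.1.factorial : ℂ)
            * (p.2.factorial : ℂ))) := by
    rintro ⟨r, s⟩
    rw [hIntVal ⟨r, s⟩]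
    have hGsum_ne : Complex.Gamma ((η₁ + r) + (η₂ + s)) ≠ 0 := by
      apply Gamma_ne_zero_re_pos
      have h1 := hre1 r
      have h2 := hre2 s
      rw [Complex.add_re]
      linarith
    have hb := Complex.Gamma_mul_Gamma_eq_betaIntegral (hre1 r) (hre2 s)
    have hbeta : Complex.betaIntegral (η₁ + r) (η₂ + s)
        = Complex.Gamma (η₁ + r) * Complex.Gamma (η₂ + s)
          / Complex.Gamma ((η₁ + r) + (η₂ + s)) := by
      rw [hb, mul_div_cancel_left₀ _ hGsum_ne]
    have hGc : Complex.Gamma ((η₁ + r) + (η₂ + s))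
        = Complex.Gamma (η₁ + η₂) * (ascPochhammer ℂ (r + s)).eval (η₁ + η₂) := by
      have hcast : ((η₁ + r) + (η₂ + s) : ℂ) = (η₁ + η₂) + ((r + s : ℕ) : ℂ) := by
        push_cast; ring
      rw [hcast, Gamma_add_nat_s5 (by rw [Complex.add_re]; linarith) (r + s)]
    rw [hbeta, Gamma_add_nat_s5 hη₁ r, Gamma_add_nat_s5 hη₂ s, hGc, hC]
    simp only [bcoef]
    have hrf : (r.factorial : ℂ) ≠ 0 := by exact_mod_cast Nat.factorial_ne_zero r
    have hsf : (s.factorial : ℂ) ≠ 0 := by exact_mod_cast Nat.factorial_ne_zero s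
    have hpoch_ne : (ascPochhammer ℂ (r + s)).eval (η₁ + η₂) ≠ 0 :=
      poch_ne_zero_s5 (by rw [Complex.add_re]; linarith) (r + s)
    field_simp
  have hsum_t : Summable (fun p : ℕ × ℕ => ∫ u in S, f p u) :=
    Summable.of_norm_bounded hSum_int (fun p => MeasureTheory.norm_integral_le_integral_norm _)
  rw [Summable.tsum_prod hsum_t]
  calc (∑' (r : ℕ) (s : ℕ), ∫ u in S, f (r, s) u)
      = ∑' (r : ℕ) (s : ℕ),
        (Complex.Gamma η₁ * Complex.Gamma η₂ / Complex.Gamma (η₁ + η₂))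
        * ((ascPochhammer ℂ r).eval η₁ * (ascPochhammer ℂ s).eval η₂
          * (ascPochhammer ℂ r).eval β₁ * (ascPochhammer ℂ s).eval β₂
          * z₁ ^ r * z₂ ^ s
          / ((ascPochhammer ℂ (r + s)).eval (η₁ + η₂) * (r.factorial : ℂ)
            * (s.factorial : ℂ))) := by
        apply tsum_congr; intro r; apply tsum_congr; intro s; exact hterm (r, s)
    _ = _ := by simp_rw [tsum_mul_left]

end Aux

/-- Euler-type integral representation of the third Appell function `F₃`. -/
theorem integral_appellF3 (η₁ η₂ β₁ β₂ z₁ z₂ : ℂ)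
    (hη₁ : 0 < η₁.re) (hη₂ : 0 < η₂.re)
    (hz₁ : ‖z₁‖ < 1) (hz₂ : ‖z₂‖ < 1) :
    (∫ u in (0:ℝ)..1, (u : ℂ) ^ (η₁ - 1) * (1 - (u : ℂ)) ^ (η₂ - 1)
        * (1 - z₁ * (u : ℂ)) ^ (-β₁) * (1 - z₂ * (1 - (u : ℂ))) ^ (-β₂))
    = (Complex.Gamma η₁ * Complex.Gamma η₂ / Complex.Gamma (η₁ + η₂))
      * appellF3 η₁ η₂ β₁ β₂ (η₁ + η₂) z₁ z₂ := by
  rw [appellF3]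
  exact integral_appellF3' η₁ η₂ β₁ β₂ z₁ z₂ hη₁ hη₂ hz₁ hz₂
end

section
/- Let η₁, η₂ ∈ ℂ with Re(η₁) > 0 and Re(η₂) > 0, let a₁ < a₂ be real numbers, and let ξ > −1, σ > −1 be real. Then ∫_{a₁}^{a₂} (u−a₁)^{η₁−1} (a₂−u)^{η₂−1} / [(a₂−a₁) + ξ(u−a₁) + σ(a₂−u)]^{η₁+η₂} du = B(η₁, η₂) · (ξ+1)^{−η₁} (σ+1)^{−η₂} / (a₂−a₁). -/
open Complex MeasureTheory Set

lemma cpow_exp_of_pos {x : ℝ} (hx : 0 < x) (w : ℂ) :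
    ((x:ℝ):ℂ) ^ w = Complex.exp ((Real.log x : ℂ) * w) := by
  rw [Complex.cpow_def_of_ne_zero (by exact_mod_cast hx.ne'), Complex.ofReal_log hx.le]

lemma ofReal_eq_exp_log {x : ℝ} (hx : 0 < x) :
    ((x:ℝ):ℂ) = Complex.exp ((Real.log x : ℂ)) := by
  rw [← Complex.ofReal_exp, Real.exp_log hx]

lemma aux_const (η₁ η₂ : ℂ) (c p q E s t : ℝ) (hc : 0<c) (hp:0<p) (hq:0<q) (hE:0<E)
    (hs:0<s) (ht:0<t) :
    ((c*q*p/E^2 : ℝ):ℂ) * (((c*q*s/E:ℝ):ℂ)^(η₁-1) * ((c*p*t/E:ℝ):ℂ)^(η₂-1)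
      / ((c*p*q/E:ℝ):ℂ)^(η₁+η₂))
    = ((p:ℝ):ℂ)^(-η₁) * ((q:ℝ):ℂ)^(-η₂) / ((c:ℝ):ℂ) * (((s:ℝ):ℂ)^(η₁-1) * ((t:ℝ):ℂ)^(η₂-1)) := by
  have h1 : (0:ℝ) < c*q*s/E := by positivity
  have h2 : (0:ℝ) < c*p*t/E := by positivity
  have h3 : (0:ℝ) < c*p*q/E := by positivity
  have h4 : (0:ℝ) < c*q*p/E^2 := by positivity
  rw [cpow_exp_of_pos h1, cpow_exp_of_pos h2, cpow_exp_of_pos h3, cpow_exp_of_pos hp,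
    cpow_exp_of_pos hq, cpow_exp_of_pos hs, cpow_exp_of_pos ht,
    ofReal_eq_exp_log h4, ofReal_eq_exp_log hc]
  have l1 : Real.log (c*q*s/E) = Real.log c + Real.log q + Real.log s - Real.log E := by
    rw [Real.log_div (by positivity) hE.ne', Real.log_mul (by positivity) hs.ne',
      Real.log_mul hc.ne' hq.ne']
  have l2 : Real.log (c*p*t/E) = Real.log c + Real.log p + Real.log t - Real.log E := by
    rw [Real.log_div (by positivity) hE.ne', Real.log_mul (by positivity) ht.ne',
      Real.log_mul hc.ne' hp.ne']
  have l3 : Real.log (c*p*q/E) = Real.log c + Real.log p + Real.log q - Real.log E := by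
    rw [Real.log_div (by positivity) hE.ne', Real.log_mul (by positivity) hq.ne',
      Real.log_mul hc.ne' hp.ne']
  have l4 : Real.log (c*q*p/E^2) = Real.log c + Real.log q + Real.log p - 2*Real.log E := by
    rw [Real.log_div (by positivity) (by positivity), Real.log_mul (by positivity) hp.ne',
      Real.log_mul hc.ne' hq.ne', Real.log_pow]
    push_cast; ring
  rw [l1, l2, l3, l4]
  simp only [div_eq_mul_inv, ← Complex.exp_neg, ← Complex.exp_add]
  congr 1
  push_cast
  ring

/-- The beta-type integral of `(u-a₁)^{η₁-1}(a₂-u)^{η₂-1} h(u)^{-(η₁+η₂)}` with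
`h(u) = (a₂-a₁) + ξ(u-a₁) + σ(a₂-u)`. -/
theorem integral_selberg_type (η₁ η₂ : ℂ) (hη₁ : 0 < η₁.re) (hη₂ : 0 < η₂.re)
    (a₁ a₂ ξ σ : ℝ) (ha : a₁ < a₂) (hξ : -1 < ξ) (hσ : -1 < σ) :
    (∫ u in a₁..a₂, ((u - a₁ : ℝ) : ℂ) ^ (η₁ - 1) * ((a₂ - u : ℝ) : ℂ) ^ (η₂ - 1)
        / (((a₂ - a₁) + ξ * (u - a₁) + σ * (a₂ - u) : ℝ) : ℂ) ^ (η₁ + η₂))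
    = (Complex.Gamma η₁ * Complex.Gamma η₂ / Complex.Gamma (η₁ + η₂))
      * ((ξ + 1 : ℝ) : ℂ) ^ (-η₁) * ((σ + 1 : ℝ) : ℂ) ^ (-η₂) / ((a₂ - a₁ : ℝ) : ℂ) := by
  have hp : (0:ℝ) < ξ + 1 := by linarith
  have hq : (0:ℝ) < σ + 1 := by linarith
  have hc : (0:ℝ) < a₂ - a₁ := by linarith
  set p := ξ + 1 with hpdef
  set q := σ + 1 with hqdef
  set c := a₂ - a₁ with hcdef
  set E : ℝ → ℝ := fun s => p * (1 - s) + q * s with hEdef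
  have hE : ∀ s ∈ Icc (0:ℝ) 1, 0 < E s := by
    rintro s ⟨h0, h1⟩
    show 0 < p * (1 - s) + q * s
    have h3 : 0 ≤ q * s := mul_nonneg hq.le h0
    rcases eq_or_lt_of_le h1 with rfl | h1
    · have : q * 1 = q := mul_one q
      nlinarith
    · nlinarith [mul_pos hp (by linarith : (0:ℝ) < 1 - s)]
  set φ : ℝ → ℝ := fun s => a₁ + c * q * s / E s with hφdef
  set g : ℝ → ℂ := fun u => ((u - a₁ : ℝ) : ℂ) ^ (η₁ - 1) * ((a₂ - u : ℝ) : ℂ) ^ (η₂ - 1)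
        / (((a₂ - a₁) + ξ * (u - a₁) + σ * (a₂ - u) : ℝ) : ℂ) ^ (η₁ + η₂) with hgdef
  -- derivative of φ on Ioo 0 1
  have hderiv : ∀ s ∈ Ioo (0:ℝ) 1, HasDerivWithinAt φ (c*q*p/(E s)^2) (Ioo 0 1) s := by
    intro s hs
    have hEs : E s ≠ 0 := (hE s (Ioo_subset_Icc_self hs)).ne'
    have h1 : HasDerivAt (fun s : ℝ => c * q * s) (c*q) s := by
      simpa using (hasDerivAt_id s).const_mul (c*q)
    have h2 : HasDerivAt E (q - p) s := by
      have h := (((hasDerivAt_const s (1:ℝ)).sub (hasDerivAt_id s)).const_mul p).add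
          ((hasDerivAt_id s).const_mul q)
      have : HasDerivAt (fun s : ℝ => p * (1 - s) + q * s) (p * (0 - 1) + q * 1) s := by
        simpa [Pi.add_def] using h
      convert this using 1
      ring
    have h3 : HasDerivAt (fun s => c * q * s / E s)
        ((c*q * E s - c*q*s * (q-p)) / (E s)^2) s := h1.div h2 hEs
    have h4 : HasDerivAt φ (c*q*p/(E s)^2) s := by
      have : (c*q * E s - c*q*s * (q-p)) / (E s)^2 = c*q*p/(E s)^2 := by
        rw [div_eq_div_iff (by positivity) (by positivity)]
        simp only [hEdef]; ring
      simpa [hφdef, this, Pi.add_def] using (hasDerivAt_const s a₁).add h3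
    exact h4.hasDerivWithinAt
  -- injectivity
  have hinj : InjOn φ (Ioo 0 1) := by
    intro s hs s' hs' hss
    have hEs : E s ≠ 0 := (hE s (Ioo_subset_Icc_self hs)).ne'
    have hEs' : E s' ≠ 0 := (hE s' (Ioo_subset_Icc_self hs')).ne'
    have : c * q * s / E s = c * q * s' / E s' := by
      simpa [hφdef] using hss
    rw [div_eq_div_iff hEs hEs'] at this
    have hcq : c * q * p ≠ 0 := by positivity
    have h5 : c * q * p * s = c * q * p * s' := by
      simp only [hEdef] at this
      linear_combination this
    exact mul_left_cancel₀ hcq h5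
  -- image
  have himg : φ '' Ioo 0 1 = Ioo a₁ a₂ := by
    ext u
    constructor
    · rintro ⟨s, hs, rfl⟩
      have hEs := hE s (Ioo_subset_Icc_self hs)
      constructor
      · have h6 : 0 < c * q * s / E s :=
          div_pos (mul_pos (mul_pos hc hq) hs.1) hEs
        show a₁ < a₁ + c * q * s / E s
        linarith
      · have key : c * q * s / E s < c := by
          rw [div_lt_iff₀ hEs]
          have h1s : 0 < 1 - s := by linarith [hs.2]
          show c * q * s < c * (p * (1 - s) + q * s)
          nlinarith [mul_pos (mul_pos hc hp) h1s]
        show a₁ + c * q * s / E s < a₂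
        have : c = a₂ - a₁ := hcdef
        linarith
    · rintro ⟨h1, h2⟩
      set t : ℝ := (u - a₁) / c with htdef
      have ht0 : 0 < t := div_pos (by linarith) hc
      have ht1 : t < 1 := by rw [htdef, div_lt_one hc]; linarith
      set F : ℝ := q * (1 - t) + p * t with hFdef
      have hF : 0 < F := by nlinarith [mul_pos hq (by linarith : (0:ℝ) < 1 - t), mul_pos hp ht0]
      refine ⟨p * t / F, ⟨div_pos (mul_pos hp ht0) hF, ?_⟩, ?_⟩
      · rw [div_lt_one hF]
        nlinarith [mul_pos hq (by linarith : (0:ℝ) < 1 - t)]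
      · -- φ (p t / F) = u
        have hEval : E (p * t / F) = p * q / F := by
          show p * (1 - p * t / F) + q * (p * t / F) = p * q / F
          rw [eq_div_iff hF.ne']
          have hFF : F⁻¹ * F = 1 := inv_mul_cancel₀ hF.ne'
          simp only [div_eq_mul_inv]
          linear_combination (q*p*t - p*p*t) * hFF + p * hFdef
        simp only [hφdef, hEval]
        have hu : u = a₁ + c * t := by rw [htdef]; field_simp; ring
        rw [hu]
        have hne : p * q / F ≠ 0 := by positivity
        have key2 : c * q * (p * t / F) / (p * q / F) = c * t := by
          rw [div_eq_iff hne]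
          field_simp
        show a₁ + c * q * (p * t / F) / (p * q / F) = a₁ + c * t
        rw [key2]
  -- main computation
  rw [intervalIntegral.integral_of_le ha.le]
  have step1 : ∫ u in Ioc a₁ a₂, g u = ∫ u in Ioo a₁ a₂, g u :=
    integral_Ioc_eq_integral_Ioo
  rw [step1, ← himg,
    integral_image_eq_integral_abs_deriv_smul measurableSet_Ioo hderiv hinj g]
  have step2 : ∀ s ∈ Ioo (0:ℝ) 1,
      |c*q*p/(E s)^2| • g (φ s)
      = ((p:ℝ):ℂ)^(-η₁) * ((q:ℝ):ℂ)^(-η₂) / ((c:ℝ):ℂ)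
        * (((s:ℝ):ℂ)^(η₁-1) * ((1-s:ℝ):ℂ)^(η₂-1)) := by
    intro s hs
    have hEs := hE s (Ioo_subset_Icc_self hs)
    have hs0 := hs.1
    have hs1 : 0 < 1 - s := by linarith [hs.2]
    have e1 : φ s - a₁ = c * q * s / E s := by simp [hφdef]
    have hEx : E s = p * (1 - s) + q * s := rfl
    have e2 : a₂ - φ s = c * p * (1-s) / E s := by
      show a₂ - (a₁ + c * q * s / E s) = c * p * (1-s) / E s
      rw [eq_div_iff hEs.ne']
      field_simp [hEs.ne']
      rw [hEx, hcdef, hpdef, hqdef]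
      ring
    have e3 : (a₂ - a₁) + ξ * (c * q * s / E s) + σ * (c * p * (1 - s) / E s)
        = c * p * q / E s := by
      rw [eq_div_iff hEs.ne']
      field_simp [hEs.ne']
      rw [hEx, hcdef, hpdef, hqdef]
      ring
    have habs : |c*q*p/(E s)^2| = c*q*p/(E s)^2 := abs_of_pos (by positivity)
    rw [habs, hgdef]
    simp only [e1, e2]
    rw [e3, Complex.real_smul]
    exact aux_const η₁ η₂ c p q (E s) s (1-s) hc hp hq hEs hs0 hs1
  rw [setIntegral_congr_fun measurableSet_Ioo step2, integral_const_mul]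
  have step3 : (∫ s in Ioo (0:ℝ) 1, ((s:ℝ):ℂ)^(η₁-1) * ((1-s:ℝ):ℂ)^(η₂-1))
      = Complex.betaIntegral η₁ η₂ := by
    rw [Complex.betaIntegral, intervalIntegral.integral_of_le zero_le_one,
      integral_Ioc_eq_integral_Ioo]
    refine setIntegral_congr_fun measurableSet_Ioo fun s _ => ?_
    push_cast
    ring_nf
  rw [step3]
  have hbeta : Complex.Gamma η₁ * Complex.Gamma η₂ / Complex.Gamma (η₁ + η₂)
      = Complex.betaIntegral η₁ η₂ := by
    rw [Complex.Gamma_mul_Gamma_eq_betaIntegral hη₁ hη₂]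
    rw [mul_div_cancel_left₀]
    exact Complex.Gamma_ne_zero_of_re_pos (by simpa using by positivity)
  rw [hbeta]
  ring
end
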